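/- arXiv:cs/0207094 — 4 statements merged into one kernel-verified Lean document; each statement's English description precedes it below -/
import Mathlib

section
/- Let D be an infinite domain, r a database instance over D, and IC a set of domain independent binary integrity constraints. Then the map S ↦ {p(ā) | p′(ā) ∈ S} is a one-to-one correspondence between the answer sets of the repair program Π(r) (built with the active-domain predicate act_r in place of dom) and the repairs of r wrt IC. -/
namespace CQA

/-! ## Ground disjunctive extended logic programs and answer sets -/

/-- Ground literals over atoms of type `α`: atoms and classically negated atoms. -/
inductive Lit (α : Type) : Type
  | pos : α → Lit α
  | neg : α → Lit α

/-- Complement of a ground literal. -/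
def Lit.compl {α : Type} : Lit α → Lit α
  | .pos a => .neg a
  | .neg a => .pos a

/-- A ground disjunctive rule `⋁ head ← body, not nbody`
(`nbody` collects the literals occurring under weak negation `not`). -/
structure Rule (α : Type) where
  head : Set (Lit α)
  body : Set (Lit α)
  nbody : Set (Lit α)

/-- A ground disjunctive extended logic program: a set of ground rules. -/
abbrev Program (α : Type) := Set (Rule α)

/-- A fact. -/
def fact {α : Type} (L : Lit α) : Rule α := ⟨{L}, ∅, ∅⟩

/-- `S` contains no complementary pair of literals. -/
def Coherent {α : Type} (S : Set (Lit α)) : Prop :=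
  ∀ a : α, ¬ (Lit.pos a ∈ S ∧ Lit.neg a ∈ S)

/-- `S` satisfies every rule of `P`, reading `not L` as `L ∉ S`:
whenever all body literals are in `S` and no weakly negated literal is in `S`,
some head disjunct is in `S`. -/
def SatProg {α : Type} (S : Set (Lit α)) (P : Program α) : Prop :=
  ∀ R ∈ P, R.body ⊆ S → (∀ L ∈ R.nbody, L ∉ S) → ∃ L ∈ R.head, L ∈ S

/-- A model of a ground program: a set of ground literals without complementary
pairs satisfying every rule, with `not L` read as `L ∉ S`. -/
def IsModel {α : Type} (S : Set (Lit α)) (P : Program α) : Prop :=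
  Coherent S ∧ SatProg S P

/-- The Gelfond–Lifschitz reduct of `P` with respect to `S`: delete every rule
whose body contains `not L` with `L ∈ S`, then delete all remaining `not L`
conditions. -/
def reduct {α : Type} (P : Program α) (S : Set (Lit α)) : Program α :=
  {R' | ∃ R ∈ P, (∀ L ∈ R.nbody, L ∉ S) ∧ R' = Rule.mk R.head R.body ∅}

/-- `S` is an answer set of `P`: `S` has no complementary pair and is a minimal
model of the reduct `^S P`. -/
def AnswerSet {α : Type} (S : Set (Lit α)) (P : Program α) : Prop :=
  Coherent S ∧ SatProg S (reduct P S) ∧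
    ∀ S' : Set (Lit α), S' ⊆ S → SatProg S' (reduct P S) → S' = S

/-- The intersection of all answer sets of `P`. -/
def Core {α : Type} (P : Program α) : Set (Lit α) :=
  {L | ∀ S : Set (Lit α), AnswerSet S P → L ∈ S}

/-! ## Well-founded semantics for ground extended disjunctive programs -/

/-- The body of rule `R` is true in the partial interpretation `I`:
the body literals belong to `I` and every weakly negated literal is false
(its complement belongs to `I`). -/
def bodyTrue {α : Type} (I : Set (Lit α)) (R : Rule α) : Prop :=
  R.body ⊆ I ∧ ∀ L ∈ R.nbody, L.compl ∈ I

/-- Immediate-consequence operator `T_Π(I)`: all literals occurring in the head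
of a rule whose body is true in `I` and whose remaining head disjuncts are
false in `I`. -/
def Timm {α : Type} (P : Program α) (I : Set (Lit α)) : Set (Lit α) :=
  {L | ∃ R ∈ P, L ∈ R.head ∧ bodyTrue I R ∧ ∀ L' ∈ R.head, L' ≠ L → L'.compl ∈ I}

/-- `X` is an unfounded set of literals with respect to `I`: for every `L ∈ X`
and every rule with `L` in its head, either the body is false or defeated
(some body literal has its complement in `I` or lies in `X`, or some weakly
negated literal is in `I`), or the head is already satisfied by `I`
independently of `X`. -/
def UnfoundedSet {α : Type} (P : Program α) (I X : Set (Lit α)) : Prop :=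
  ∀ L ∈ X, ∀ R ∈ P, L ∈ R.head →
    (∃ B ∈ R.body, B.compl ∈ I ∨ B ∈ X) ∨
    (∃ B ∈ R.nbody, B ∈ I) ∨
    (∃ L' ∈ R.head, L' ≠ L ∧ L' ∈ I ∧ L' ∉ X)

/-- The greatest unfounded set of `P` with respect to `I`. -/
def GUS {α : Type} (P : Program α) (I : Set (Lit α)) : Set (Lit α) :=
  ⋃₀ {X | UnfoundedSet P I X}

/-- The well-founded operator `𝒲_Π(I) := T_Π(I) ∪ ¬.GUS_Π(I)`. -/
def WOp {α : Type} (P : Program α) (I : Set (Lit α)) : Set (Lit α) :=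
  Timm P I ∪ Lit.compl '' GUS P I

/-- The well-founded interpretation `W_Π`, the least fixpoint `𝒲_Π^ω(∅)`. -/
def WFInterp {α : Type} (P : Program α) : Set (Lit α) :=
  ⋃ n : ℕ, (WOp P)^[n] ∅

/-! ## Relational databases and binary integrity constraints -/

/-- A ground database atom `p(ā)` over predicates `Pred` and domain `D`. -/
abbrev DBAtom (Pred D : Type) := Pred × List D

/-- A database instance over the schema `(Pred, ar)` and domain `D`:
a finite set of ground atoms respecting the arities. -/
structure Instance (Pred D : Type) (ar : Pred → ℕ) where
  atoms : Set (DBAtom Pred D)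
  finite : atoms.Finite
  wf : ∀ a ∈ atoms, a.2.length = ar a.1

/-- A binary integrity constraint in standard format
`∀ (⋁_i p_i(x̄_i) ∨ ⋁_i ¬q_i(ȳ_i) ∨ φ)` with `1 ≤ n + m ≤ 2`,
where `φ` is a formula of built-in predicates with fixed extensions
(represented semantically as a predicate on variable assignments). -/
structure BIC (Pred D : Type) (ar : Pred → ℕ) where
  nvars : ℕ
  pos : List (Pred × List (Fin nvars))
  neg : List (Pred × List (Fin nvars))
  builtin : (Fin nvars → D) → Prop
  wfpos : ∀ a ∈ pos, a.2.length = ar a.1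
  wfneg : ∀ a ∈ neg, a.2.length = ar a.1
  lb : 1 ≤ pos.length + neg.length
  ub : pos.length + neg.length ≤ 2

variable {Pred D : Type} {ar : Pred → ℕ}

/-- The ground clause of constraint `c` under the assignment `ν` holds in the
set of atoms `A`. -/
def BIC.holdsAt (c : BIC Pred D ar) (A : Set (DBAtom Pred D)) (ν : Fin c.nvars → D) : Prop :=
  (∃ a ∈ c.pos, (a.1, a.2.map ν) ∈ A) ∨ (∃ a ∈ c.neg, (a.1, a.2.map ν) ∉ A) ∨ c.builtin ν

/-- The set of atoms `A` (as a Herbrand structure over `D`) satisfies all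
constraints in `IC`. -/
def SatSet (A : Set (DBAtom Pred D)) (IC : Set (BIC Pred D ar)) : Prop :=
  ∀ c ∈ IC, ∀ ν : Fin c.nvars → D, c.holdsAt A ν

/-- The instance `r` satisfies the set of integrity constraints `IC`. -/
def SatIC (r : Instance Pred D ar) (IC : Set (BIC Pred D ar)) : Prop :=
  SatSet r.atoms IC

/-- `r'` is a repair of `r` w.r.t. `IC`: `r' ⊨ IC` and the symmetric difference
`Δ(r,r')` is minimal under set inclusion in `{Δ(r,r*) | r* ⊨ IC}`. -/
def IsRepair (r r' : Instance Pred D ar) (IC : Set (BIC Pred D ar)) : Prop :=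
  SatIC r' IC ∧
    ∀ r'' : Instance Pred D ar, SatIC r'' IC →
      symmDiff r.atoms r''.atoms ⊆ symmDiff r.atoms r'.atoms →
      symmDiff r.atoms r''.atoms = symmDiff r.atoms r'.atoms

/-- `r'` is a Dalal repair of `r` w.r.t. `IC`: `r' ⊨ IC` and the cardinality
`|Δ(r,r')|` is minimal in `{|Δ(r,r*)| : r* ⊨ IC}`. -/
def IsDalalRepair (r r' : Instance Pred D ar) (IC : Set (BIC Pred D ar)) : Prop :=
  SatIC r' IC ∧
    ∀ r'' : Instance Pred D ar, SatIC r'' IC →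
      (symmDiff r.atoms r'.atoms).ncard ≤ (symmDiff r.atoms r''.atoms).ncard

/-! ## The change program and the repair program -/

/-- Atoms of the repair programs: database atoms `p(ā)`, primed atoms `p′(ā)`,
and domain atoms `dom(a)` (playing the role of `act_r(a)` when grounding over
the active domain). -/
inductive GAtom (Pred D : Type) : Type
  | base : Pred → List D → GAtom Pred D
  | primed : Pred → List D → GAtom Pred D
  | dom : D → GAtom Pred D

/-- Variables occurring in a list of atoms with variable tuples. -/
def varsIn {n : ℕ} (l : List (Pred × List (Fin n))) : Set (Fin n) :=
  {v | ∃ a ∈ l, v ∈ a.2}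

/-- The domain atoms `dom(ν v)` for the variables `v ∈ V`. -/
def domBody {n : ℕ} (ν : Fin n → D) (V : Set (Fin n)) : Set (Lit (GAtom Pred D)) :=
  {L | ∃ v ∈ V, L = Lit.pos (GAtom.dom (ν v))}

/-- The positive primed head disjuncts `p′_i(ν x̄_i)` of constraint `c`. -/
def posHead (c : BIC Pred D ar) (ν : Fin c.nvars → D) : Set (Lit (GAtom Pred D)) :=
  {L | ∃ a ∈ c.pos, L = Lit.pos (GAtom.primed a.1 (a.2.map ν))}

/-- The negative primed head disjuncts `¬q′_i(ν ȳ_i)` of constraint `c`. -/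
def negHead (c : BIC Pred D ar) (ν : Fin c.nvars → D) : Set (Lit (GAtom Pred D)) :=
  {L | ∃ a ∈ c.neg, L = Lit.neg (GAtom.primed a.1 (a.2.map ν))}

/-- The triggering rule of constraint `c` at assignment `ν`:
`⋁ p′_i ∨ ⋁ ¬q′_i ← dom(x̄_1,…,x̄_n), not p_1,…,not p_n, q_1,…,q_m, not φ`
(the condition `not φ` on the built-in formula, which has a fixed extension,
is accounted for by including the ground rule only when `φ(ν)` is false). -/
def trigRule (c : BIC Pred D ar) (ν : Fin c.nvars → D) : Rule (GAtom Pred D) where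
  head := posHead c ν ∪ negHead c ν
  body := domBody ν (varsIn c.pos) ∪
    {L | ∃ a ∈ c.neg, L = Lit.pos (GAtom.base a.1 (a.2.map ν))}
  nbody := {L | ∃ a ∈ c.pos, L = Lit.pos (GAtom.base a.1 (a.2.map ν))}

/-- The stabilizing rule of `c` at `ν` for the `j`-th positive database literal:
remove `p′_j` from the disjunctive head and add its complement `¬p′_j` to the
body, together with the `dom` atoms and `not φ`. -/
def stabPosRule (c : BIC Pred D ar) (ν : Fin c.nvars → D) (j : Fin c.pos.length) :
    Rule (GAtom Pred D) where
  head := {L | ∃ i : Fin c.pos.length, i ≠ j ∧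
      L = Lit.pos (GAtom.primed (c.pos.get i).1 ((c.pos.get i).2.map ν))} ∪ negHead c ν
  body := domBody ν (varsIn c.pos ∪ varsIn c.neg) ∪
    {Lit.neg (GAtom.primed (c.pos.get j).1 ((c.pos.get j).2.map ν))}
  nbody := ∅

/-- The stabilizing rule of `c` at `ν` for the `j`-th negative database literal:
remove `¬q′_j` from the disjunctive head and add its complement `q′_j` to the
body, together with the `dom` atoms and `not φ`. -/
def stabNegRule (c : BIC Pred D ar) (ν : Fin c.nvars → D) (j : Fin c.neg.length) :
    Rule (GAtom Pred D) where
  head := posHead c ν ∪ {L | ∃ i : Fin c.neg.length, i ≠ j ∧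
      L = Lit.neg (GAtom.primed (c.neg.get i).1 ((c.neg.get i).2.map ν))}
  body := domBody ν (varsIn c.pos ∪ varsIn c.neg) ∪
    {Lit.pos (GAtom.primed (c.neg.get j).1 ((c.neg.get j).2.map ν))}
  nbody := ∅

/-- The change program `Π_Δ(r)` grounded over the subdomain `A ⊆ D`:
facts for `r` and for the (active) domain, triggering rules and stabilizing
rules for all constraints in `IC`. -/
def changeProgOn (r : Instance Pred D ar) (IC : Set (BIC Pred D ar)) (A : Set D) :
    Program (GAtom Pred D) :=
  {R | ∃ a ∈ r.atoms, R = fact (Lit.pos (GAtom.base a.1 a.2))} ∪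
  {R | ∃ d ∈ A, R = fact (Lit.pos (GAtom.dom d))} ∪
  {R | ∃ c ∈ IC, ∃ ν : Fin c.nvars → D, (∀ i, ν i ∈ A) ∧ ¬ c.builtin ν ∧ R = trigRule c ν} ∪
  {R | ∃ c ∈ IC, ∃ ν : Fin c.nvars → D, (∀ i, ν i ∈ A) ∧ ¬ c.builtin ν ∧
        ∃ j : Fin c.pos.length, R = stabPosRule c ν j} ∪
  {R | ∃ c ∈ IC, ∃ ν : Fin c.nvars → D, (∀ i, ν i ∈ A) ∧ ¬ c.builtin ν ∧
        ∃ j : Fin c.neg.length, R = stabNegRule c ν j}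

/-- The change program `Π_Δ(r)` grounded over the full domain `D`. -/
def changeProg (r : Instance Pred D ar) (IC : Set (BIC Pred D ar)) :
    Program (GAtom Pred D) :=
  changeProgOn r IC Set.univ

/-- The persistence rules `p′(x̄) ← p(x̄), not ¬p′(x̄)` and
`¬p′(x̄) ← dom(x̄), not p(x̄), not p′(x̄)`, grounded over `A ⊆ D`. -/
def persistProgOn (ar : Pred → ℕ) (A : Set D) : Program (GAtom Pred D) :=
  {R | ∃ (p : Pred) (t : List D), t.length = ar p ∧ (∀ d ∈ t, d ∈ A) ∧
    (R = Rule.mk {Lit.pos (GAtom.primed p t)} {Lit.pos (GAtom.base p t)}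
          {Lit.neg (GAtom.primed p t)} ∨
     R = Rule.mk {Lit.neg (GAtom.primed p t)} {L | ∃ d ∈ t, L = Lit.pos (GAtom.dom d)}
          {Lit.pos (GAtom.base p t), Lit.pos (GAtom.primed p t)})}

/-- The repair program `Π(r)` grounded over `A ⊆ D`: the change program plus
the persistence rules. -/
def repairProgOn (r : Instance Pred D ar) (IC : Set (BIC Pred D ar)) (A : Set D) :
    Program (GAtom Pred D) :=
  changeProgOn r IC A ∪ persistProgOn ar A

/-- The repair program `Π(r)` grounded over the full domain `D`. -/
def repairProg (r : Instance Pred D ar) (IC : Set (BIC Pred D ar)) :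
    Program (GAtom Pred D) :=
  repairProgOn r IC Set.univ

/-- The database instance corresponding to a set of ground literals:
`I(S) = {p(ā) | p′(ā) ∈ S} ∪ {p(ā) | p(ā) ∈ S and ¬p′(ā) ∉ S}`. -/
def IofS (S : Set (Lit (GAtom Pred D))) : Set (DBAtom Pred D) :=
  {a | Lit.pos (GAtom.primed a.1 a.2) ∈ S} ∪
  {a | Lit.pos (GAtom.base a.1 a.2) ∈ S ∧ Lit.neg (GAtom.primed a.1 a.2) ∉ S}

/-- The database instance `{p(ā) | p′(ā) ∈ S}` extracted from the primed
atoms of `S`. -/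
def primedAtoms (S : Set (Lit (GAtom Pred D))) : Set (DBAtom Pred D) :=
  {a | Lit.pos (GAtom.primed a.1 a.2) ∈ S}

/-- `S(r,r′) = {p(ā) | p(ā) ∈ r} ∪ {p′(ā) | p(ā) ∈ r′} ∪ {¬p′(ā) | p(ā) ∉ r′}
∪ {dom(a) | a ∈ D}`. -/
def SofRR (r r' : Instance Pred D ar) : Set (Lit (GAtom Pred D)) :=
  {L | ∃ a ∈ r.atoms, L = Lit.pos (GAtom.base a.1 a.2)} ∪
  {L | ∃ a ∈ r'.atoms, L = Lit.pos (GAtom.primed a.1 a.2)} ∪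
  {L | ∃ a : DBAtom Pred D, a.2.length = ar a.1 ∧ a ∉ r'.atoms ∧
        L = Lit.neg (GAtom.primed a.1 a.2)} ∪
  {L | ∃ d : D, L = Lit.pos (GAtom.dom d)}

/-! ## Active domain and domain independence -/

/-- The active domain of `r`: the constants occurring in `r`. -/
def ActDom (r : Instance Pred D ar) : Set D :=
  {d | ∃ a ∈ r.atoms, d ∈ a.2}

/-- Satisfaction of `IC` in `A` relativized to the subdomain `Dm`. -/
def SatSetOn (A : Set (DBAtom Pred D)) (IC : Set (BIC Pred D ar)) (Dm : Set D) : Prop :=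
  ∀ c ∈ IC, ∀ ν : Fin c.nvars → D, (∀ i, ν i ∈ Dm) → c.holdsAt A ν

/-- `IC` is domain independent: for every instance, satisfaction of the
constraints depends only on the active domain. -/
def DomIndep (IC : Set (BIC Pred D ar)) : Prop :=
  ∀ (r : Instance Pred D ar) (A : Set D), ActDom r ⊆ A →
    (SatSetOn r.atoms IC A ↔ SatSet r.atoms IC)

/-! ## Weak constraints and Dalal answer sets -/

/-- The violated ground instances of the weak constraints
`⇐ p′(x̄), not p(x̄)` and `⇐ ¬p′(x̄), p(x̄)` in `S` (a ground weak constraint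
is violated by `S` iff all its body conditions hold in `S`). -/
def weakViol (ar : Pred → ℕ) (S : Set (Lit (GAtom Pred D))) :
    Set (Bool × DBAtom Pred D) :=
  {x | x.2.2.length = ar x.2.1 ∧
    ((x.1 = true ∧ Lit.pos (GAtom.primed x.2.1 x.2.2) ∈ S ∧
        Lit.pos (GAtom.base x.2.1 x.2.2) ∉ S) ∨
     (x.1 = false ∧ Lit.neg (GAtom.primed x.2.1 x.2.2) ∈ S ∧
        Lit.pos (GAtom.base x.2.1 x.2.2) ∈ S))}

/-- Answer sets of the program `Π^D(r)` (the change program plus the weak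
constraints): answer sets of `Π_Δ(r)` minimizing the number of violated
ground weak constraints. -/
def DalalAnswerSet (r : Instance Pred D ar) (IC : Set (BIC Pred D ar))
    (S : Set (Lit (GAtom Pred D))) : Prop :=
  AnswerSet S (changeProg r IC) ∧
    ∀ S' : Set (Lit (GAtom Pred D)), AnswerSet S' (changeProg r IC) →
      (weakViol ar S).ncard ≤ (weakViol ar S').ncard

/-! ## Functional dependencies and unary constraints -/

/-- A unary integrity constraint: a BIC with at most one database literal. -/
def BIC.IsUnary (c : BIC Pred D ar) : Prop := c.pos.length + c.neg.length ≤ 1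

/-- A functional dependency: a BIC of the form
`∀ (¬p(x̄,ȳ) ∨ ¬p(x̄,z̄) ∨ ȳ = z̄)` with pairwise distinct variables. -/
def BIC.IsFD (c : BIC Pred D ar) : Prop :=
  c.pos = [] ∧ ∃ (p : Pred) (xs ys zs : List (Fin c.nvars)),
    ys.length = zs.length ∧ (xs ++ ys ++ zs).Nodup ∧
    c.neg = [(p, xs ++ ys), (p, xs ++ zs)] ∧
    ∀ ν : Fin c.nvars → D, (c.builtin ν ↔ ys.map ν = zs.map ν)

/-!
An answer set `S` of `Π(r)` over `Act(r)` is determined by its primed atoms `ρ`: minimality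
removes every literal that is not the head of some rule, and the persistence rules add `¬p′(a)`
for every other atom `a` over `Act(r)`. The stabilizing rules make this set a model of its own
reduct exactly when `ρ` satisfies `IC` on `Act(r)`, which by domain independence means `ρ ⊨ IC`.

The two minimality conditions then match. If `σ ⊨ IC` and `Δ(r,σ) ⊆ Δ(r,ρ)`, the literals on
which `ρ` and `σ` agree still form a model of the reduct (a binary constraint that both satisfy
is satisfied by both at a common literal whenever its other literal fails in both), so `σ = ρ`.
Conversely, a model `S'` of the reduct below the answer set built from a repair `r'` yields the
instance `I(S')`, which satisfies `IC` and is at most as far from `r` as `r'`.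
-/

section Development

open Set

section AnswerSets

variable {α : Type}

lemma SatProg.exists_head_mem {S S₀ : Set (Lit α)} {P : Program α}
    (h : SatProg S (reduct P S₀)) {R : Rule α} (hR : R ∈ P) (hn : ∀ L ∈ R.nbody, L ∉ S₀)
    (hb : R.body ⊆ S) : ∃ L ∈ R.head, L ∈ S :=
  h ⟨R.head, R.body, ∅⟩ ⟨R, hR, hn, rfl⟩ hb fun _ h => absurd h (notMem_empty _)

lemma AnswerSet.subset_heads {S : Set (Lit α)} {P : Program α} (hA : AnswerSet S P) :
    S ⊆ {L | ∃ R ∈ P, L ∈ R.head} := by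
  obtain ⟨-, hS, hmin⟩ := hA
  have hmodel : SatProg (S ∩ {L | ∃ R ∈ P, L ∈ R.head}) (reduct P S) := by
    rintro _ ⟨R, hR, hn, rfl⟩ hb -
    obtain ⟨L, hL, hLS⟩ := hS.exists_head_mem hR hn (hb.trans inter_subset_left)
    exact ⟨L, hL, hLS, R, hR, hL⟩
  rw [← hmin _ inter_subset_left hmodel]
  exact inter_subset_right

lemma Coherent.mono {S S' : Set (Lit α)} (h : Coherent S) (hS' : S' ⊆ S) : Coherent S' :=
  fun a ha => h a ⟨hS' ha.1, hS' ha.2⟩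

end AnswerSets

lemma mem_iff_mem_of_mem_symmDiff {β : Type} {s t u : Set β} {a : β}
    (ht : a ∈ symmDiff s t) (hu : a ∈ symmDiff s u) : a ∈ t ↔ a ∈ u := by
  rw [mem_symmDiff] at ht hu
  tauto

lemma mem_iff_of_symmDiff_subset {β : Type} {s t u : Set β} {a : β}
    (hΔ : symmDiff s t ⊆ symmDiff s u) (h : a ∈ s ↔ a ∈ u) : a ∈ t ↔ a ∈ u := by
  by_cases ht : a ∈ symmDiff s t
  · exact mem_iff_mem_of_mem_symmDiff ht (hΔ ht)
  · rw [mem_symmDiff] at ht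
    tauto

lemma symmDiff_inter_subset_symmDiff {β : Type} {s B U : Set β} (hs : s ⊆ U) :
    symmDiff s (B ∩ U) ⊆ symmDiff s B := by
  intro a
  have := @hs a
  simp only [mem_symmDiff, mem_inter_iff]
  tauto

abbrev posBase (a : DBAtom Pred D) : Lit (GAtom Pred D) := .pos (.base a.1 a.2)

abbrev posPrimed (a : DBAtom Pred D) : Lit (GAtom Pred D) := .pos (.primed a.1 a.2)

abbrev negPrimed (a : DBAtom Pred D) : Lit (GAtom Pred D) := .neg (.primed a.1 a.2)

abbrev domLit (d : D) : Lit (GAtom Pred D) := .pos (.dom d)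

def actAtoms (r : Instance Pred D ar) : Set (DBAtom Pred D) :=
  {a | a.2.length = ar a.1 ∧ ∀ d ∈ a.2, d ∈ ActDom r}

lemma atoms_subset_actAtoms (r : Instance Pred D ar) : r.atoms ⊆ actAtoms r :=
  fun a ha => ⟨r.wf a ha, fun _ hd => ⟨a, ha, hd⟩⟩

lemma finite_actDom (r : Instance Pred D ar) : (ActDom r).Finite := by
  have : ActDom r = ⋃ a ∈ r.atoms, {d | d ∈ a.2} := by
    ext d
    simp [ActDom]
  rw [this]
  exact r.finite.biUnion fun a _ => a.2.finite_toSet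

lemma finite_lists_length_eq {A : Set D} (hA : A.Finite) (n : ℕ) :
    {l : List D | l.length = n ∧ ∀ d ∈ l, d ∈ A}.Finite := by
  have : Finite A := hA.to_subtype
  refine ((List.finite_length_eq A n).image (List.map Subtype.val)).subset ?_
  rintro l ⟨hl, hlA⟩
  lift l to List A using hlA
  exact ⟨l, by simpa using hl, rfl⟩

lemma finite_actAtoms [Finite Pred] (r : Instance Pred D ar) : (actAtoms r).Finite := by
  refine (finite_iUnion fun p : Pred => (finite_singleton p).prod
    (finite_lists_length_eq (finite_actDom r) (ar p))).subset ?_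
  rintro ⟨p, t⟩ ⟨hl, ht⟩
  exact mem_iUnion.2 ⟨p, rfl, hl, ht⟩

def Instance.ofSubset [Finite Pred] {r : Instance Pred D ar} (B : Set (DBAtom Pred D))
    (hB : B ⊆ actAtoms r) : Instance Pred D ar :=
  ⟨B, (finite_actAtoms r).subset hB, fun _ ha => (hB ha).1⟩

namespace BIC

variable (c : BIC Pred D ar) (ν : Fin c.nvars → D)

/-- Positions of the database literals of `c`: `.inl i` is `p_i(x̄_i)`, `.inr k` is `¬q_k(ȳ_k)`. -/
abbrev Idx : Type := Fin c.pos.length ⊕ Fin c.neg.length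

def atomAt : c.Idx → DBAtom Pred D
  | .inl i => ((c.pos.get i).1, (c.pos.get i).2.map ν)
  | .inr k => ((c.neg.get k).1, (c.neg.get k).2.map ν)

def LitHolds (A : Set (DBAtom Pred D)) : c.Idx → Prop
  | .inl i => c.atomAt ν (.inl i) ∈ A
  | .inr k => c.atomAt ν (.inr k) ∉ A

def primedLit : c.Idx → Lit (GAtom Pred D)
  | .inl i => posPrimed (c.atomAt ν (.inl i))
  | .inr k => negPrimed (c.atomAt ν (.inr k))

def stabRule (x : c.Idx) : Rule (GAtom Pred D) where
  head := {L | ∃ y ≠ x, L = c.primedLit ν y}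
  body := domBody ν (varsIn c.pos ∪ varsIn c.neg) ∪ {(c.primedLit ν x).compl}
  nbody := ∅

variable {c ν}

lemma holdsAt_iff {A : Set (DBAtom Pred D)} :
    c.holdsAt A ν ↔ (∃ x, c.LitHolds ν A x) ∨ c.builtin ν := by
  constructor
  · rintro (⟨a, ha, h⟩ | ⟨a, ha, h⟩ | h)
    · obtain ⟨i, rfl⟩ := List.mem_iff_get.1 ha
      exact .inl ⟨.inl i, h⟩
    · obtain ⟨k, rfl⟩ := List.mem_iff_get.1 ha
      exact .inl ⟨.inr k, h⟩
    · exact .inr h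
  · rintro (⟨i | k, h⟩ | h)
    · exact .inl ⟨_, List.get_mem _ _, h⟩
    · exact .inr (.inl ⟨_, List.get_mem _ _, h⟩)
    · exact .inr (.inr h)

lemma eq_of_ne_of_ne {x y z : c.Idx} (hx : x ≠ z) (hy : y ≠ z) : x = y := by
  by_contra hxy
  have h3 : ({x, y, z} : Finset c.Idx).card = 3 :=
    Finset.card_eq_three.2 ⟨x, y, z, hxy, hx, hy, rfl⟩
  have hle := Finset.card_le_univ ({x, y, z} : Finset c.Idx)
  simp only [Fintype.card_sum, Fintype.card_fin] at hle
  have := c.ub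
  omega

lemma litHolds_congr {A B : Set (DBAtom Pred D)} {x : c.Idx}
    (h : c.atomAt ν x ∈ A ↔ c.atomAt ν x ∈ B) : c.LitHolds ν A x ↔ c.LitHolds ν B x := by
  cases x <;> simp only [LitHolds, h]

lemma litHolds_of_symmDiff_subset {s ρ σ : Set (DBAtom Pred D)} {x : c.Idx}
    (hΔ : symmDiff s σ ⊆ symmDiff s ρ) (hs : ¬ c.LitHolds ν s x) (hσ : c.LitHolds ν σ x) :
    c.LitHolds ν ρ x := by
  have hmem : c.atomAt ν x ∈ symmDiff s σ := by
    by_contra hn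
    rw [mem_symmDiff] at hn
    exact hs ((litHolds_congr (by tauto)).2 hσ)
  exact (litHolds_congr (mem_iff_mem_of_mem_symmDiff hmem (hΔ hmem))).1 hσ

lemma atomAt_mem_actAtoms {r : Instance Pred D ar} (hν : ∀ i, ν i ∈ ActDom r) (x : c.Idx) :
    c.atomAt ν x ∈ actAtoms r := by
  have key : ∀ a : Pred × List (Fin c.nvars), a.2.length = ar a.1 →
      ((a.1, a.2.map ν) : DBAtom Pred D) ∈ actAtoms r := by
    refine fun a ha => ⟨by simpa using ha, fun d hd => ?_⟩
    obtain ⟨i, -, rfl⟩ := List.mem_map.1 hd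
    exact hν i
  cases x
  · exact key _ (c.wfpos _ (List.get_mem _ _))
  · exact key _ (c.wfneg _ (List.get_mem _ _))

lemma trigRule_head : (trigRule c ν).head = range (c.primedLit ν) := by
  ext L
  simp only [trigRule, posHead, negHead, mem_union, mem_ofPred_eq, mem_range]
  constructor
  · rintro (⟨a, ha, rfl⟩ | ⟨a, ha, rfl⟩)
    · obtain ⟨i, rfl⟩ := List.mem_iff_get.1 ha
      exact ⟨.inl i, rfl⟩
    · obtain ⟨k, rfl⟩ := List.mem_iff_get.1 ha
      exact ⟨.inr k, rfl⟩
  · rintro ⟨i | k, rfl⟩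
    · exact .inl ⟨_, List.get_mem _ _, rfl⟩
    · exact .inr ⟨_, List.get_mem _ _, rfl⟩

lemma stabPosRule_eq (j : Fin c.pos.length) : stabPosRule c ν j = c.stabRule ν (.inl j) := by
  simp only [stabPosRule, stabRule, Rule.mk.injEq, and_true]
  refine ⟨?_, rfl⟩
  ext L
  simp only [negHead, mem_union, mem_ofPred_eq]
  constructor
  · rintro (⟨i, hij, rfl⟩ | ⟨a, ha, rfl⟩)
    · exact ⟨.inl i, fun h => hij (Sum.inl_injective h), rfl⟩
    · obtain ⟨k, rfl⟩ := List.mem_iff_get.1 ha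
      exact ⟨.inr k, Sum.inr_ne_inl, rfl⟩
  · rintro ⟨i | k, hne, rfl⟩
    · exact .inl ⟨i, fun h => hne (h ▸ rfl), rfl⟩
    · exact .inr ⟨_, List.get_mem _ _, rfl⟩

lemma stabNegRule_eq (j : Fin c.neg.length) : stabNegRule c ν j = c.stabRule ν (.inr j) := by
  simp only [stabNegRule, stabRule, Rule.mk.injEq, and_true]
  refine ⟨?_, rfl⟩
  ext L
  simp only [posHead, mem_union, mem_ofPred_eq]
  constructor
  · rintro (⟨a, ha, rfl⟩ | ⟨k, hkj, rfl⟩)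
    · obtain ⟨i, rfl⟩ := List.mem_iff_get.1 ha
      exact ⟨.inl i, Sum.inl_ne_inr, rfl⟩
    · exact ⟨.inr k, fun h => hkj (Sum.inr_injective h), rfl⟩
  · rintro ⟨i | k, hne, rfl⟩
    · exact .inl ⟨_, List.get_mem _ _, rfl⟩
    · exact .inr ⟨k, fun h => hne (h ▸ rfl), rfl⟩

end BIC

/-- The literals over `Act(r)` fixed by a pair `m ⊆ M` of lower and upper approximations of
a repair: the facts, `p′(a)` for `a ∈ m`, and `¬p′(a)` for `a ∉ M`. Answer sets are the sets
`answerLits r ρ`, and `canonLits r (ρ ∩ σ) (ρ ∪ σ)` keeps only what `ρ` and `σ` agree on. -/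
def canonLits (r : Instance Pred D ar) (m M : Set (DBAtom Pred D)) : Set (Lit (GAtom Pred D))
  | .pos (.base p t) => (p, t) ∈ r.atoms
  | .pos (.dom d) => d ∈ ActDom r
  | .pos (.primed p t) => (p, t) ∈ m
  | .neg (.primed p t) => (p, t) ∈ actAtoms r ∧ (p, t) ∉ M
  | .neg (.base _ _) | .neg (.dom _) => False

abbrev answerLits (r : Instance Pred D ar) (ρ : Set (DBAtom Pred D)) :
    Set (Lit (GAtom Pred D)) :=
  canonLits r ρ ρ

section CanonLits

variable {r : Instance Pred D ar} {m M ρ σ : Set (DBAtom Pred D)}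

lemma coherent_canonLits (h : m ⊆ M) : Coherent (canonLits r m M) := by
  rintro (⟨p, t⟩ | ⟨p, t⟩ | d) ⟨h₁, h₂⟩
  · exact h₂
  · exact h₂.2 (h h₁)
  · exact h₂

lemma canonLits_mono {m' M' : Set (DBAtom Pred D)} (hm : m ⊆ m') (hM : M' ⊆ M) :
    canonLits r m M ⊆ canonLits r m' M' := by
  rintro ((⟨p, t⟩ | ⟨p, t⟩ | d) | (⟨p, t⟩ | ⟨p, t⟩ | d)) hL
  · exact hL
  · exact hm hL
  · exact hL
  · exact hL
  · exact ⟨hL.1, fun h => hL.2 (hM h)⟩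
  · exact hL

lemma IofS_answerLits : IofS (answerLits r ρ) = ρ := by
  ext a
  constructor
  · rintro (h | ⟨hr, hn⟩)
    · exact h
    · by_contra ha
      exact hn ⟨atoms_subset_actAtoms r hr, ha⟩
  · exact .inl

lemma domBody_subset_canonLits {n : ℕ} {ν : Fin n → D} (hν : ∀ i, ν i ∈ ActDom r)
    (V : Set (Fin n)) : domBody ν V ⊆ canonLits r m M := by
  rintro _ ⟨v, -, rfl⟩
  exact hν v

variable {c : BIC Pred D ar} {ν : Fin c.nvars → D}

lemma primedLit_mem_canonLits_actAtoms (hν : ∀ i, ν i ∈ ActDom r) (x : c.Idx) :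
    c.primedLit ν x ∈ canonLits r (actAtoms r) ∅ := by
  cases x
  · exact BIC.atomAt_mem_actAtoms hν _
  · exact ⟨BIC.atomAt_mem_actAtoms hν _, notMem_empty _⟩

lemma primedLit_mem_canonLits_inter_union (hν : ∀ i, ν i ∈ ActDom r) (x : c.Idx) :
    c.primedLit ν x ∈ canonLits r (ρ ∩ σ) (ρ ∪ σ) ↔
      c.LitHolds ν ρ x ∧ c.LitHolds ν σ x := by
  cases x
  · exact Iff.rfl
  · change _ ∧ _ ↔ _
    simp only [BIC.atomAt_mem_actAtoms hν, true_and, mem_union, not_or]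
    rfl

lemma compl_primedLit_mem_canonLits_inter_union (hν : ∀ i, ν i ∈ ActDom r) (x : c.Idx) :
    (c.primedLit ν x).compl ∈ canonLits r (ρ ∩ σ) (ρ ∪ σ) ↔
      ¬ c.LitHolds ν ρ x ∧ ¬ c.LitHolds ν σ x := by
  cases x
  · change _ ∧ _ ↔ _
    simp only [BIC.atomAt_mem_actAtoms hν, true_and, mem_union, not_or]
    rfl
  · change _ ∈ ρ ∩ σ ↔ ¬ _ ∉ ρ ∧ ¬ _ ∉ σ
    simp only [not_not]
    rfl

end CanonLits

def persistPos (a : DBAtom Pred D) : Rule (GAtom Pred D) :=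
  ⟨{posPrimed a}, {posBase a}, {negPrimed a}⟩

def persistNeg (a : DBAtom Pred D) : Rule (GAtom Pred D) :=
  ⟨{negPrimed a}, {L | ∃ d ∈ a.2, L = domLit d}, {posBase a, posPrimed a}⟩

section RepairProgram

variable {r : Instance Pred D ar} {IC : Set (BIC Pred D ar)}

lemma mem_repairProgOn_iff {R : Rule (GAtom Pred D)} :
    R ∈ repairProgOn r IC (ActDom r) ↔
      (∃ a ∈ r.atoms, R = fact (posBase a)) ∨ (∃ d ∈ ActDom r, R = fact (domLit d)) ∨
      (∃ c ∈ IC, ∃ ν : Fin c.nvars → D, (∀ i, ν i ∈ ActDom r) ∧ ¬ c.builtin ν ∧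
        (R = trigRule c ν ∨ ∃ x, R = c.stabRule ν x)) ∨
      (∃ a ∈ actAtoms r, R = persistPos a ∨ R = persistNeg a) := by
  simp only [repairProgOn, changeProgOn, persistProgOn, mem_union, mem_ofPred_eq, or_assoc]
  constructor
  · rintro (⟨a, ha, rfl⟩ | ⟨d, hd, rfl⟩ | ⟨c, hc, ν, hν, hb, rfl⟩ | ⟨c, hc, ν, hν, hb, j, rfl⟩ |
      ⟨c, hc, ν, hν, hb, j, rfl⟩ | ⟨p, t, hl, ht, hR⟩)
    · exact .inl ⟨a, ha, rfl⟩
    · exact .inr (.inl ⟨d, hd, rfl⟩)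
    · exact .inr (.inr (.inl ⟨c, hc, ν, hν, hb, .inl rfl⟩))
    · exact .inr (.inr (.inl ⟨c, hc, ν, hν, hb, .inr ⟨_, BIC.stabPosRule_eq j⟩⟩))
    · exact .inr (.inr (.inl ⟨c, hc, ν, hν, hb, .inr ⟨_, BIC.stabNegRule_eq j⟩⟩))
    · exact .inr (.inr (.inr ⟨(p, t), ⟨hl, ht⟩, hR⟩))
  · rintro (⟨a, ha, rfl⟩ | ⟨d, hd, rfl⟩ | ⟨c, hc, ν, hν, hb, rfl | ⟨j | j, rfl⟩⟩ |
      ⟨⟨p, t⟩, ⟨hl, ht⟩, hR⟩)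
    · exact .inl ⟨a, ha, rfl⟩
    · exact .inr (.inl ⟨d, hd, rfl⟩)
    · exact .inr (.inr (.inl ⟨c, hc, ν, hν, hb, rfl⟩))
    · exact .inr (.inr (.inr (.inl ⟨c, hc, ν, hν, hb, j, (BIC.stabPosRule_eq j).symm⟩)))
    · exact .inr (.inr (.inr (.inr (.inl ⟨c, hc, ν, hν, hb, j, (BIC.stabNegRule_eq j).symm⟩))))
    · exact .inr (.inr (.inr (.inr (.inr ⟨p, t, hl, ht, hR⟩))))

lemma heads_subset_canonLits {R : Rule (GAtom Pred D)}
    (hR : R ∈ repairProgOn r IC (ActDom r)) : R.head ⊆ canonLits r (actAtoms r) ∅ := by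
  rcases mem_repairProgOn_iff.1 hR with ⟨a, ha, rfl⟩ | ⟨d, hd, rfl⟩ |
    ⟨c, -, ν, hν, -, rfl | ⟨x, rfl⟩⟩ | ⟨a, haT, rfl | rfl⟩
  · rintro _ rfl
    exact ha
  · rintro _ rfl
    exact hd
  · rw [BIC.trigRule_head]
    rintro _ ⟨y, rfl⟩
    exact primedLit_mem_canonLits_actAtoms hν y
  · rintro _ ⟨y, -, rfl⟩
    exact primedLit_mem_canonLits_actAtoms hν y
  · rintro _ rfl
    exact haT
  · rintro _ rfl
    exact ⟨haT, notMem_empty _⟩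

variable {S S₀ : Set (Lit (GAtom Pred D))}
  (h : SatProg S (reduct (repairProgOn r IC (ActDom r)) S₀))
include h

lemma posBase_mem_of_satProg {a : DBAtom Pred D} (ha : a ∈ r.atoms) : posBase a ∈ S := by
  obtain ⟨_, rfl, hL⟩ := h.exists_head_mem (mem_repairProgOn_iff.2 (.inl ⟨a, ha, rfl⟩))
    (fun _ h => absurd h (notMem_empty _)) (empty_subset _)
  exact hL

lemma domLit_mem_of_satProg {d : D} (hd : d ∈ ActDom r) : domLit d ∈ S := by
  obtain ⟨_, rfl, hL⟩ := h.exists_head_mem (mem_repairProgOn_iff.2 (.inr (.inl ⟨d, hd, rfl⟩)))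
    (fun _ h => absurd h (notMem_empty _)) (empty_subset _)
  exact hL

lemma domBody_subset_of_satProg {n : ℕ} {ν : Fin n → D} (hν : ∀ i, ν i ∈ ActDom r)
    (V : Set (Fin n)) : domBody ν V ⊆ S := by
  rintro _ ⟨v, -, rfl⟩
  exact domLit_mem_of_satProg h (hν v)

lemma posPrimed_mem_of_persist {a : DBAtom Pred D} (ha : a ∈ actAtoms r) (hb : posBase a ∈ S)
    (hn : negPrimed a ∉ S₀) : posPrimed a ∈ S := by
  obtain ⟨_, rfl, hL⟩ := h.exists_head_mem
    (mem_repairProgOn_iff.2 (.inr (.inr (.inr ⟨a, ha, .inl rfl⟩))))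
    (by rintro _ rfl; exact hn) (by rintro _ rfl; exact hb)
  exact hL

lemma negPrimed_mem_of_persist {a : DBAtom Pred D} (ha : a ∈ actAtoms r) (hb : posBase a ∉ S₀)
    (hp : posPrimed a ∉ S₀) : negPrimed a ∈ S := by
  obtain ⟨_, rfl, hL⟩ := h.exists_head_mem
    (mem_repairProgOn_iff.2 (.inr (.inr (.inr ⟨a, ha, .inr rfl⟩))))
    (by rintro _ (rfl | rfl) <;> assumption)
    (by rintro _ ⟨d, hd, rfl⟩; exact domLit_mem_of_satProg h (ha.2 d hd))
  exact hL

end RepairProgram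

section Correspondence

variable {r : Instance Pred D ar} {IC : Set (BIC Pred D ar)} {ρ σ : Set (DBAtom Pred D)}
  {S : Set (Lit (GAtom Pred D))} {c : BIC Pred D ar} {ν : Fin c.nvars → D}

lemma satSetOn_inter_actAtoms {B : Set (DBAtom Pred D)} (hB : SatSet B IC) :
    SatSetOn (B ∩ actAtoms r) IC (ActDom r) := by
  intro c hc ν hν
  rcases BIC.holdsAt_iff.1 (hB c hc ν) with ⟨i | k, h⟩ | h
  · exact BIC.holdsAt_iff.2 (.inl ⟨.inl i, h, BIC.atomAt_mem_actAtoms hν _⟩)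
  · exact BIC.holdsAt_iff.2 (.inl ⟨.inr k, fun h' => h h'.1⟩)
  · exact BIC.holdsAt_iff.2 (.inr h)

lemma trigRule_applicable_iff (hbase : ∀ a, posBase a ∈ S ↔ a ∈ r.atoms)
    (hdom : domBody ν (varsIn c.pos) ⊆ S) :
    ((∀ L ∈ (trigRule c ν).nbody, L ∉ answerLits r ρ) ∧ (trigRule c ν).body ⊆ S) ↔
      ∀ x, ¬ c.LitHolds ν r.atoms x := by
  constructor
  · rintro ⟨hnb, hb⟩ (i | k) h
    · exact hnb _ ⟨_, List.get_mem _ _, rfl⟩ h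
    · exact h ((hbase _).1 (hb (.inr ⟨_, List.get_mem _ _, rfl⟩)))
  · refine fun h => ⟨?_, union_subset hdom ?_⟩
    · rintro _ ⟨a, ha, rfl⟩ har
      obtain ⟨i, rfl⟩ := List.mem_iff_get.1 ha
      exact h (.inl i) har
    · rintro _ ⟨a, ha, rfl⟩
      obtain ⟨k, rfl⟩ := List.mem_iff_get.1 ha
      exact (hbase _).2 (not_not.1 (h (.inr k)))

lemma litHolds_IofS_of_primedLit_mem (hcoh : Coherent S) {x : c.Idx}
    (hx : c.primedLit ν x ∈ S) : c.LitHolds ν (IofS S) x := by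
  cases x
  · exact .inl hx
  · rintro (h | ⟨-, h⟩)
    · exact hcoh _ ⟨h, hx⟩
    · exact h hx

lemma compl_primedLit_mem_of_not_litHolds_IofS (hbase : ∀ a, posBase a ∈ S ↔ a ∈ r.atoms)
    {x : c.Idx} (hr : c.LitHolds ν r.atoms x) (hI : ¬ c.LitHolds ν (IofS S) x) :
    (c.primedLit ν x).compl ∈ S := by
  cases x
  · by_contra hn
    exact hI (.inr ⟨(hbase _).2 hr, hn⟩)
  · rcases not_not.1 hI with h | ⟨h, -⟩
    · exact h
    · exact absurd ((hbase _).1 h) hr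

/-- A ground constraint violated by `I(S)` would fire its triggering rule if `r` violates it
too, and otherwise the stabilizing rule at a literal that `r` satisfies. -/
lemma satSetOn_IofS (hcoh : Coherent S) (hbase : ∀ a, posBase a ∈ S ↔ a ∈ r.atoms)
    (h : SatProg S (reduct (repairProgOn r IC (ActDom r)) (answerLits r ρ))) :
    SatSetOn (IofS S) IC (ActDom r) := by
  intro c hc ν hν
  rw [BIC.holdsAt_iff]
  by_contra! hviol
  obtain ⟨hfalse, hbi⟩ := hviol
  by_cases hr : ∃ x, c.LitHolds ν r.atoms x
  · obtain ⟨x, hx⟩ := hr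
    obtain ⟨_, ⟨y, -, rfl⟩, hy⟩ := h.exists_head_mem
      (mem_repairProgOn_iff.2 (.inr (.inr (.inl ⟨c, hc, ν, hν, hbi, .inr ⟨x, rfl⟩⟩))))
      (fun _ h => absurd h (notMem_empty _))
      (union_subset (domBody_subset_of_satProg h hν _) (singleton_subset_iff.2
        (compl_primedLit_mem_of_not_litHolds_IofS hbase hx (hfalse x))))
    exact hfalse y (litHolds_IofS_of_primedLit_mem hcoh hy)
  · obtain ⟨hnb, hb⟩ := (trigRule_applicable_iff hbase (domBody_subset_of_satProg h hν _)).2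
      (not_exists.1 hr)
    obtain ⟨L, hL, hLS⟩ := h.exists_head_mem
      (mem_repairProgOn_iff.2 (.inr (.inr (.inl ⟨c, hc, ν, hν, hbi, .inl rfl⟩)))) hnb hb
    rw [BIC.trigRule_head] at hL
    obtain ⟨y, rfl⟩ := hL
    exact hfalse y (litHolds_IofS_of_primedLit_mem hcoh hLS)

lemma satSetOn_of_satProg_answerLits
    (h : SatProg (answerLits r ρ) (reduct (repairProgOn r IC (ActDom r)) (answerLits r ρ))) :
    SatSetOn ρ IC (ActDom r) := by
  simpa only [IofS_answerLits] using
    satSetOn_IofS (coherent_canonLits subset_rfl) (fun _ => Iff.rfl) h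

lemma satProg_reduct_canonLits_inter_union (hρ : SatSetOn ρ IC (ActDom r))
    (hσ : SatSetOn σ IC (ActDom r)) (hΔ : symmDiff r.atoms σ ⊆ symmDiff r.atoms ρ) :
    SatProg (canonLits r (ρ ∩ σ) (ρ ∪ σ))
      (reduct (repairProgOn r IC (ActDom r)) (answerLits r ρ)) := by
  rintro _ ⟨R, hR, hnb, rfl⟩ hb -
  rcases mem_repairProgOn_iff.1 hR with ⟨a, ha, rfl⟩ | ⟨d, hd, rfl⟩ |
    ⟨c, hc, ν, hν, hbi, rfl | ⟨x, rfl⟩⟩ | ⟨a, haT, rfl | rfl⟩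
  · exact ⟨_, rfl, ha⟩
  · exact ⟨_, rfl, hd⟩
  · have hr := (trigRule_applicable_iff (fun _ => Iff.rfl)
      (domBody_subset_canonLits hν _)).1 ⟨hnb, hb⟩
    obtain ⟨y, hy⟩ := (BIC.holdsAt_iff.1 (hσ c hc ν hν)).resolve_right hbi
    refine ⟨_, BIC.trigRule_head ▸ mem_range_self y, ?_⟩
    exact (primedLit_mem_canonLits_inter_union hν y).2
      ⟨BIC.litHolds_of_symmDiff_subset hΔ (hr y) hy, hy⟩
  · have hx := (compl_primedLit_mem_canonLits_inter_union hν x).1 (hb (.inr rfl))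
    obtain ⟨y, hy⟩ := (BIC.holdsAt_iff.1 (hρ c hc ν hν)).resolve_right hbi
    obtain ⟨z, hz⟩ := (BIC.holdsAt_iff.1 (hσ c hc ν hν)).resolve_right hbi
    have hyx : y ≠ x := by rintro rfl; exact hx.1 hy
    have hzx : z ≠ x := by rintro rfl; exact hx.2 hz
    -- a BIC has at most two literals, so the one `ρ` satisfies is the one `σ` satisfies
    obtain rfl := BIC.eq_of_ne_of_ne hyx hzx
    exact ⟨_, ⟨y, hyx, rfl⟩, (primedLit_mem_canonLits_inter_union hν y).2 ⟨hy, hz⟩⟩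
  · have haρ : a ∈ ρ := by
      by_contra hn
      exact hnb _ rfl ⟨haT, hn⟩
    have har : a ∈ r.atoms := hb rfl
    exact ⟨_, rfl, haρ, (mem_iff_of_symmDiff_subset hΔ (iff_of_true har haρ)).2 haρ⟩
  · have har : a ∉ r.atoms := hnb _ (.inl rfl)
    have haρ : a ∉ ρ := hnb _ (.inr rfl)
    have haσ : a ∉ σ := fun h => haρ
      ((mem_iff_of_symmDiff_subset hΔ (iff_of_false har haρ)).1 h)
    exact ⟨_, rfl, haT, by simp [haρ, haσ]⟩

lemma satProg_reduct_answerLits (hρ : SatSetOn ρ IC (ActDom r)) :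
    SatProg (answerLits r ρ) (reduct (repairProgOn r IC (ActDom r)) (answerLits r ρ)) := by
  simpa using satProg_reduct_canonLits_inter_union hρ hρ subset_rfl

lemma exists_eq_answerLits (hA : AnswerSet S (repairProgOn r IC (ActDom r))) :
    ∃ ρ ⊆ actAtoms r, S = answerLits r ρ := by
  have hH : S ⊆ canonLits r (actAtoms r) ∅ := fun L hL => by
    obtain ⟨R, hR, hLR⟩ := hA.subset_heads hL
    exact heads_subset_canonLits hR hLR
  obtain ⟨hcoh, hS, -⟩ := hA
  refine ⟨primedAtoms S, fun a ha => hH ha, ?_⟩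
  ext L
  rcases L with (⟨p, t⟩ | ⟨p, t⟩ | d) | (⟨p, t⟩ | ⟨p, t⟩ | d)
  · exact ⟨fun h => hH h, posBase_mem_of_satProg hS⟩
  · exact Iff.rfl
  · exact ⟨fun h => hH h, domLit_mem_of_satProg hS⟩
  · exact ⟨fun h => (hH h).elim, False.elim⟩
  · refine ⟨fun h => ⟨(hH h).1, fun hp => hcoh _ ⟨hp, h⟩⟩, fun ⟨haT, hn⟩ => ?_⟩
    by_contra hneg
    by_cases har : ((p, t) : DBAtom Pred D) ∈ r.atoms
    · exact hn (posPrimed_mem_of_persist hS haT (posBase_mem_of_satProg hS har) hneg)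
    · exact hneg (negPrimed_mem_of_persist hS haT (fun h => har (hH h)) hn)
  · exact ⟨fun h => (hH h).elim, False.elim⟩

lemma answerLits_subset
    (hS : SatProg S (reduct (repairProgOn r IC (ActDom r)) (answerLits r ρ)))
    (hbase : ∀ a, posBase a ∈ S ↔ a ∈ r.atoms) (hI : IofS S = ρ) : answerLits r ρ ⊆ S := by
  rintro ((⟨p, t⟩ | ⟨p, t⟩ | d) | (⟨p, t⟩ | ⟨p, t⟩ | d)) hL
  · exact (hbase _).2 hL
  · have hρ : ((p, t) : DBAtom Pred D) ∈ ρ := hL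
    rw [← hI] at hL
    rcases hL with h | ⟨hb, hn⟩
    · exact h
    · exact posPrimed_mem_of_persist hS (atoms_subset_actAtoms r ((hbase _).1 hb)) hb
        fun h => h.2 hρ
  · exact domLit_mem_of_satProg hS hL
  · exact hL.elim
  · obtain ⟨haT, hnρ⟩ := hL
    by_cases har : ((p, t) : DBAtom Pred D) ∈ r.atoms
    · by_contra hn
      rw [← hI] at hnρ
      exact hnρ (.inr ⟨(hbase _).2 har, hn⟩)
    · exact negPrimed_mem_of_persist hS haT har hnρ
  · exact hL.elim

lemma eq_of_answerSet_answerLits (hA : AnswerSet (answerLits r ρ) (repairProgOn r IC (ActDom r)))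
    (hσT : σ ⊆ actAtoms r) (hσ : SatSetOn σ IC (ActDom r))
    (hΔ : symmDiff r.atoms σ ⊆ symmDiff r.atoms ρ) : σ = ρ := by
  have heq := hA.2.2 _ (canonLits_mono inter_subset_left subset_union_left)
    (satProg_reduct_canonLits_inter_union (satSetOn_of_satProg_answerLits hA.2.1) hσ hΔ)
  refine subset_antisymm (fun a ha => ?_) (fun a ha => ?_)
  · by_contra hn
    have h : negPrimed a ∈ answerLits r ρ := ⟨hσT ha, hn⟩
    rw [← heq] at h
    exact h.2 (.inr ha)
  · have h : posPrimed a ∈ answerLits r ρ := ha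
    rw [← heq] at h
    exact h.2

end Correspondence

section Repairs

variable [Finite Pred] {r r' : Instance Pred D ar} {IC : Set (BIC Pred D ar)}
  {B ρ : Set (DBAtom Pred D)}

lemma satSet_of_satSetOn (hIC : DomIndep IC) (hBT : B ⊆ actAtoms r)
    (hB : SatSetOn B IC (ActDom r)) : SatSet B IC :=
  (hIC (Instance.ofSubset B hBT) (ActDom r) fun _ ⟨_, ha, hd⟩ => (hBT ha).2 _ hd).1 hB

lemma IsRepair.eq_of_symmDiff_subset (hrep : IsRepair r r' IC) (hBT : B ⊆ actAtoms r)
    (hB : SatSet B IC) (hΔ : symmDiff r.atoms B ⊆ symmDiff r.atoms r'.atoms) : B = r'.atoms :=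
  symmDiff_right_inj.1 (hrep.2 (Instance.ofSubset B hBT) hB hΔ)

lemma IsRepair.subset_actAtoms (hIC : DomIndep IC) (hrep : IsRepair r r' IC) :
    r'.atoms ⊆ actAtoms r := by
  have h := hrep.eq_of_symmDiff_subset inter_subset_right
    (satSet_of_satSetOn hIC inter_subset_right (satSetOn_inter_actAtoms hrep.1))
    (symmDiff_inter_subset_symmDiff (atoms_subset_actAtoms r))
  rw [← h]
  exact inter_subset_right

lemma eq_answerLits_of_isRepair (hIC : DomIndep IC) (hrep : IsRepair r r' IC)
    {S : Set (Lit (GAtom Pred D))} (hsub : S ⊆ answerLits r r'.atoms)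
    (hS : SatProg S (reduct (repairProgOn r IC (ActDom r)) (answerLits r r'.atoms))) :
    S = answerLits r r'.atoms := by
  have hbase : ∀ a, posBase a ∈ S ↔ a ∈ r.atoms :=
    fun a => ⟨fun h => hsub h, posBase_mem_of_satProg hS⟩
  have hIT : IofS S ⊆ actAtoms r := by
    rintro a (ha | ⟨hb, -⟩)
    · exact hrep.subset_actAtoms hIC (hsub ha)
    · exact atoms_subset_actAtoms r ((hbase a).1 hb)
  have hsat : SatSet (IofS S) IC := satSet_of_satSetOn hIC hIT
    (satSetOn_IofS ((coherent_canonLits subset_rfl).mono hsub) hbase hS)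
  have hΔ : symmDiff r.atoms (IofS S) ⊆ symmDiff r.atoms r'.atoms := by
    intro a ha
    rw [mem_symmDiff] at ha ⊢
    rcases ha with ⟨har, hn⟩ | ⟨hp | ⟨hb, -⟩, har⟩
    · have hneg : negPrimed a ∈ S := by
        by_contra hneg
        exact hn (.inr ⟨(hbase a).2 har, hneg⟩)
      exact .inl ⟨har, (hsub hneg).2⟩
    · exact .inr ⟨hsub hp, har⟩
    · exact absurd ((hbase a).1 hb) har
  exact hsub.antisymm (answerLits_subset hS hbase (hrep.eq_of_symmDiff_subset hIT hsat hΔ))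

lemma answerSet_of_isRepair (hIC : DomIndep IC) (hrep : IsRepair r r' IC) :
    AnswerSet (answerLits r r'.atoms) (repairProgOn r IC (ActDom r)) :=
  ⟨coherent_canonLits subset_rfl, satProg_reduct_answerLits fun c hc ν _ => hrep.1 c hc ν,
    fun _ hsub hS => eq_answerLits_of_isRepair hIC hrep hsub hS⟩

lemma isRepair_of_answerSet (hIC : DomIndep IC)
    (hA : AnswerSet (answerLits r ρ) (repairProgOn r IC (ActDom r))) (hρT : ρ ⊆ actAtoms r) :
    IsRepair r (Instance.ofSubset ρ hρT) IC := by
  refine ⟨satSet_of_satSetOn hIC hρT (satSetOn_of_satProg_answerLits hA.2.1),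
    fun r'' hsat hΔ => hΔ.antisymm ?_⟩
  have hrestrict := symmDiff_inter_subset_symmDiff (B := r''.atoms) (atoms_subset_actAtoms r)
  have hσ := eq_of_answerSet_answerLits hA inter_subset_right (satSetOn_inter_actAtoms hsat)
    (hrestrict.trans hΔ)
  exact hσ ▸ hrestrict

end Repairs

end Development

theorem statement7_general {Pred D : Type} [Finite Pred] {ar : Pred → ℕ}
    (r : Instance Pred D ar) (IC : Set (BIC Pred D ar)) (hIC : DomIndep IC) :
    (∀ S : Set (Lit (GAtom Pred D)), AnswerSet S (repairProgOn r IC (ActDom r)) →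
      ∃ r' : Instance Pred D ar, r'.atoms = primedAtoms S ∧ IsRepair r r' IC) ∧
    (∀ r' : Instance Pred D ar, IsRepair r r' IC →
      ∃ S : Set (Lit (GAtom Pred D)), AnswerSet S (repairProgOn r IC (ActDom r)) ∧
        primedAtoms S = r'.atoms) ∧
    (∀ S S' : Set (Lit (GAtom Pred D)), AnswerSet S (repairProgOn r IC (ActDom r)) →
      AnswerSet S' (repairProgOn r IC (ActDom r)) →
      primedAtoms S = primedAtoms S' → S = S') := by
  refine ⟨fun S hA => ?_, fun r' hrep => ⟨_, answerSet_of_isRepair hIC hrep, rfl⟩,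
    fun S S' hA hA' hprimed => ?_⟩
  · obtain ⟨ρ, hρT, rfl⟩ := exists_eq_answerLits hA
    exact ⟨Instance.ofSubset ρ hρT, rfl, isRepair_of_answerSet hIC hA hρT⟩
  · obtain ⟨ρ, -, rfl⟩ := exists_eq_answerLits hA
    obtain ⟨ρ', -, rfl⟩ := exists_eq_answerLits hA'
    exact congrArg (answerLits r) hprimed

/-- Theorem `theo:domainindep`. Let `D` be an infinite
domain, `r` a database instance over `D`, and `IC` a set of domain independent
binary integrity constraints. Then the map `S ↦ {p(ā) | p′(ā) ∈ S}` is a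
one-to-one correspondence between the answer sets of the repair program `Π(r)`
(built with the active-domain predicate `act_r` in place of `dom`, i.e.
grounded over `Act(r)`) and the repairs of `r` wrt `IC`. -/
theorem statement7 {Pred D : Type} [Finite Pred] [Infinite D] {ar : Pred → ℕ}
    (r : Instance Pred D ar) (IC : Set (BIC Pred D ar)) (hIC : DomIndep IC) :
    (∀ S : Set (Lit (GAtom Pred D)), AnswerSet S (repairProgOn r IC (ActDom r)) →
      ∃ r' : Instance Pred D ar, r'.atoms = primedAtoms S ∧ IsRepair r r' IC) ∧
    (∀ r' : Instance Pred D ar, IsRepair r r' IC →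
      ∃ S : Set (Lit (GAtom Pred D)), AnswerSet S (repairProgOn r IC (ActDom r)) ∧
        primedAtoms S = r'.atoms) ∧
    (∀ S S' : Set (Lit (GAtom Pred D)), AnswerSet S (repairProgOn r IC (ActDom r)) →
      AnswerSet S' (repairProgOn r IC (ActDom r)) →
      primedAtoms S = primedAtoms S' → S = S') :=
  statement7_general r IC hIC

end CQA
end

section
/- Let r be a database instance over a finite domain D and IC a set of binary integrity constraints. For every Dalal repair r′ of r wrt IC, there exists an answer set S of the program Π^D(r) such that I(S) = r′. -/
namespace CQA

variable {Pred D : Type} {ar : Pred → ℕ}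

/-! ## Auxiliary machinery for the proof of Statement 9 -/

section Aux

variable {Pred D : Type} {ar : Pred → ℕ}

/-- Well-formed atoms: those respecting the arities. -/
def WFat (ar : Pred → ℕ) : Set (DBAtom Pred D) := {a | a.2.length = ar a.1}

lemma WFat_finite [Finite Pred] [Finite D] : (WFat (D := D) ar).Finite := by
  have hsub : WFat (D := D) ar ⊆
      ⋃ p : Pred, (fun l => ((p, l) : DBAtom Pred D)) '' {l : List D | l.length = ar p} := by
    rintro ⟨p, l⟩ h
    exact Set.mem_iUnion.2 ⟨p, ⟨l, h, rfl⟩⟩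
  exact Set.Finite.subset
    (Set.finite_iUnion (fun p => (List.finite_length_eq (α := D) (ar p)).image _)) hsub

/-- The base atoms of `S`. -/
def posBaseOf (S : Set (Lit (GAtom Pred D))) : Set (DBAtom Pred D) :=
  {a | Lit.pos (GAtom.base a.1 a.2) ∈ S}

/-- The negated primed atoms of `S`. -/
def PnegOf (S : Set (Lit (GAtom Pred D))) : Set (DBAtom Pred D) :=
  {a | Lit.neg (GAtom.primed a.1 a.2) ∈ S}

lemma mem_IofS {S : Set (Lit (GAtom Pred D))} {a : DBAtom Pred D} :
    a ∈ IofS S ↔ Lit.pos (GAtom.primed a.1 a.2) ∈ S ∨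
      (Lit.pos (GAtom.base a.1 a.2) ∈ S ∧ Lit.neg (GAtom.primed a.1 a.2) ∉ S) :=
  Iff.rfl

/-- Literals allowed to occur in answer sets. -/
def goodLits (r : Instance Pred D ar) : Set (Lit (GAtom Pred D)) :=
  {L | ∃ a ∈ r.atoms, L = Lit.pos (GAtom.base a.1 a.2)} ∪
  {L | ∃ d : D, L = Lit.pos (GAtom.dom d)} ∪
  {L | ∃ p t, t.length = ar p ∧
    (L = Lit.pos (GAtom.primed p t) ∨ L = Lit.neg (GAtom.primed p t))}

/-- The base facts of `r` as literals. -/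
def baseLits (r : Instance Pred D ar) : Set (Lit (GAtom Pred D)) :=
  {L | ∃ a ∈ r.atoms, L = Lit.pos (GAtom.base a.1 a.2)}

lemma mem_baseLits {r : Instance Pred D ar} {p : Pred} {t : List D} :
    Lit.pos (GAtom.base p t) ∈ baseLits r ↔ (p, t) ∈ r.atoms := by
  constructor
  · rintro ⟨a, ha, hEq⟩
    obtain ⟨h1, h2⟩ : p = a.1 ∧ t = a.2 := by
      simpa using hEq
    subst h1; subst h2; simpa using ha
  · intro h; exact ⟨(p, t), h, rfl⟩

/-- The canonical reduct of the change program. -/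
def Pstar (r : Instance Pred D ar) (IC : Set (BIC Pred D ar)) : Program (GAtom Pred D) :=
  reduct (changeProg r IC) (baseLits r)

section Membership

variable {r : Instance Pred D ar} {IC : Set (BIC Pred D ar)}

lemma fact_base_mem {a : DBAtom Pred D} (ha : a ∈ r.atoms) :
    fact (Lit.pos (GAtom.base a.1 a.2)) ∈ changeProg r IC := by
  left; left; left; left; exact ⟨a, ha, rfl⟩

lemma fact_dom_mem (d : D) :
    fact (Lit.pos (GAtom.dom d)) ∈ changeProg r IC := by
  left; left; left; right; exact ⟨d, Set.mem_univ d, rfl⟩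

lemma trig_mem {c : BIC Pred D ar} (hc : c ∈ IC) {ν : Fin c.nvars → D}
    (hb : ¬ c.builtin ν) : trigRule c ν ∈ changeProg r IC := by
  left; left; right; exact ⟨c, hc, ν, fun i => Set.mem_univ _, hb, rfl⟩

lemma stabPos_mem {c : BIC Pred D ar} (hc : c ∈ IC) {ν : Fin c.nvars → D}
    (hb : ¬ c.builtin ν) (j : Fin c.pos.length) :
    stabPosRule c ν j ∈ changeProg r IC := by
  left; right; exact ⟨c, hc, ν, fun i => Set.mem_univ _, hb, j, rfl⟩

lemma stabNeg_mem {c : BIC Pred D ar} (hc : c ∈ IC) {ν : Fin c.nvars → D}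
    (hb : ¬ c.builtin ν) (j : Fin c.neg.length) :
    stabNegRule c ν j ∈ changeProg r IC := by
  right; exact ⟨c, hc, ν, fun i => Set.mem_univ _, hb, j, rfl⟩

/-- Every weakly negated literal in a change-program rule is a positive base literal. -/
lemma nbody_posBase {R : Rule (GAtom Pred D)} (hR : R ∈ changeProg r IC) :
    ∀ L ∈ R.nbody, ∃ p t, L = Lit.pos (GAtom.base p t) := by
  rcases hR with ((((⟨a, _, rfl⟩ | ⟨d, _, rfl⟩) | ⟨c, _, ν, _, _, rfl⟩) |
    ⟨c, _, ν, _, _, j, rfl⟩) | ⟨c, _, ν, _, _, j, rfl⟩)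
  · rintro L hL; exact absurd hL (Set.notMem_empty L)
  · rintro L hL; exact absurd hL (Set.notMem_empty L)
  · rintro L ⟨a, _, rfl⟩; exact ⟨_, _, rfl⟩
  · rintro L hL; exact absurd hL (Set.notMem_empty L)
  · rintro L hL; exact absurd hL (Set.notMem_empty L)

/-- Every head literal of a change-program rule is a good literal. -/
lemma head_subset_good {R : Rule (GAtom Pred D)} (hR : R ∈ changeProg r IC) :
    R.head ⊆ goodLits r := by
  rcases hR with ((((⟨a, ha, rfl⟩ | ⟨d, _, rfl⟩) | ⟨c, _, ν, _, _, rfl⟩) |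
    ⟨c, _, ν, _, _, j, rfl⟩) | ⟨c, _, ν, _, _, j, rfl⟩)
  · rintro L hL
    rcases hL with rfl
    exact Or.inl (Or.inl ⟨a, ha, rfl⟩)
  · rintro L hL
    rcases hL with rfl
    exact Or.inl (Or.inr ⟨d, rfl⟩)
  · rintro L (⟨a, ha, rfl⟩ | ⟨a, ha, rfl⟩)
    · exact Or.inr ⟨a.1, a.2.map ν, by simpa using c.wfpos a ha, Or.inl rfl⟩
    · exact Or.inr ⟨a.1, a.2.map ν, by simpa using c.wfneg a ha, Or.inr rfl⟩
  · rintro L (⟨i, hi, rfl⟩ | ⟨a, ha, rfl⟩)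
    · exact Or.inr ⟨_, _, by simpa using c.wfpos _ (List.get_mem c.pos i), Or.inl rfl⟩
    · exact Or.inr ⟨a.1, a.2.map ν, by simpa using c.wfneg a ha, Or.inr rfl⟩
  · rintro L (⟨a, ha, rfl⟩ | ⟨i, hi, rfl⟩)
    · exact Or.inr ⟨a.1, a.2.map ν, by simpa using c.wfpos a ha, Or.inl rfl⟩
    · exact Or.inr ⟨_, _, by simpa using c.wfneg _ (List.get_mem c.neg i), Or.inr rfl⟩

/-- The reduct of the change program only depends on the positive base literals. -/
lemma reduct_changeProg_eq {S : Set (Lit (GAtom Pred D))}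
    (h : ∀ p t, Lit.pos (GAtom.base p t) ∈ S ↔ (p, t) ∈ r.atoms) :
    reduct (changeProg r IC) S = Pstar r IC := by
  have key : ∀ R ∈ changeProg r IC,
      ((∀ L ∈ R.nbody, L ∉ S) ↔ (∀ L ∈ R.nbody, L ∉ baseLits r)) := by
    intro R hR
    constructor
    · intro hc L hL
      obtain ⟨p, t, rfl⟩ := nbody_posBase hR L hL
      rw [mem_baseLits, ← h]; exact hc _ hL
    · intro hc L hL
      obtain ⟨p, t, rfl⟩ := nbody_posBase hR L hL
      rw [h, ← mem_baseLits (r := r)]; exact hc _ hL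
  ext R'
  constructor
  · rintro ⟨R, hR, hn, rfl⟩; exact ⟨R, hR, (key R hR).1 hn, rfl⟩
  · rintro ⟨R, hR, hn, rfl⟩; exact ⟨R, hR, (key R hR).2 hn, rfl⟩

lemma fact_base_mem_Pstar {a : DBAtom Pred D} (ha : a ∈ r.atoms) :
    Rule.mk {Lit.pos (GAtom.base a.1 a.2)} ∅ ∅ ∈ Pstar r IC :=
  ⟨_, fact_base_mem ha, fun L hL => absurd hL (Set.notMem_empty L), rfl⟩

lemma fact_dom_mem_Pstar (d : D) :
    Rule.mk {Lit.pos (GAtom.dom d)} ∅ ∅ ∈ Pstar (r := r) IC :=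
  ⟨_, fact_dom_mem d, fun L hL => absurd hL (Set.notMem_empty L), rfl⟩

lemma trig_mem_Pstar {c : BIC Pred D ar} (hc : c ∈ IC) {ν : Fin c.nvars → D}
    (hb : ¬ c.builtin ν)
    (hp : ∀ a ∈ c.pos, (a.1, a.2.map ν) ∉ r.atoms) :
    Rule.mk (trigRule c ν).head (trigRule c ν).body ∅ ∈ Pstar r IC := by
  refine ⟨_, trig_mem hc hb, ?_, rfl⟩
  rintro L ⟨a, ha, rfl⟩ hLb
  exact hp a ha (mem_baseLits.1 hLb)

lemma stabPos_mem_Pstar {c : BIC Pred D ar} (hc : c ∈ IC) {ν : Fin c.nvars → D}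
    (hb : ¬ c.builtin ν) (j : Fin c.pos.length) :
    Rule.mk (stabPosRule c ν j).head (stabPosRule c ν j).body ∅ ∈ Pstar r IC :=
  ⟨_, stabPos_mem hc hb j, fun L hL => absurd hL (Set.notMem_empty L), rfl⟩

lemma stabNeg_mem_Pstar {c : BIC Pred D ar} (hc : c ∈ IC) {ν : Fin c.nvars → D}
    (hb : ¬ c.builtin ν) (j : Fin c.neg.length) :
    Rule.mk (stabNegRule c ν j).head (stabNegRule c ν j).body ∅ ∈ Pstar r IC :=
  ⟨_, stabNeg_mem hc hb j, fun L hL => absurd hL (Set.notMem_empty L), rfl⟩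

end Membership

section SofRRLemmas

variable {r r' : Instance Pred D ar}

lemma mem_SofRR_base {p : Pred} {t : List D} :
    Lit.pos (GAtom.base p t) ∈ SofRR r r' ↔ (p, t) ∈ r.atoms := by
  constructor
  · rintro (((⟨a, ha, hEq⟩ | ⟨a, ha, hEq⟩) | ⟨a, _, _, hEq⟩) | ⟨d, hEq⟩) <;>
      first
      | (obtain ⟨h1, h2⟩ : p = a.1 ∧ t = a.2 := by simpa using hEq
         subst h1; subst h2; simpa using ha)
      | simp at hEq
  · intro h; exact Or.inl (Or.inl (Or.inl ⟨(p, t), h, rfl⟩))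

lemma mem_SofRR_primed {p : Pred} {t : List D} :
    Lit.pos (GAtom.primed p t) ∈ SofRR r r' ↔ (p, t) ∈ r'.atoms := by
  constructor
  · rintro (((⟨a, ha, hEq⟩ | ⟨a, ha, hEq⟩) | ⟨a, _, _, hEq⟩) | ⟨d, hEq⟩) <;>
      first
      | (obtain ⟨h1, h2⟩ : p = a.1 ∧ t = a.2 := by simpa using hEq
         subst h1; subst h2; simpa using ha)
      | simp at hEq
  · intro h; exact Or.inl (Or.inl (Or.inr ⟨(p, t), h, rfl⟩))

lemma mem_SofRR_negprimed {p : Pred} {t : List D} :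
    Lit.neg (GAtom.primed p t) ∈ SofRR r r' ↔ (t.length = ar p ∧ (p, t) ∉ r'.atoms) := by
  constructor
  · rintro (((⟨a, ha, hEq⟩ | ⟨a, ha, hEq⟩) | ⟨a, hlen, hna, hEq⟩) | ⟨d, hEq⟩) <;>
      first
      | (obtain ⟨h1, h2⟩ : p = a.1 ∧ t = a.2 := by simpa using hEq
         subst h1; subst h2; exact ⟨hlen, hna⟩)
      | simp at hEq
  · rintro ⟨h1, h2⟩; exact Or.inl (Or.inr ⟨(p, t), h1, h2, rfl⟩)

lemma mem_SofRR_dom (d : D) : Lit.pos (GAtom.dom d) ∈ SofRR r r' :=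
  Or.inr ⟨d, rfl⟩

lemma SofRR_coherent : Coherent (SofRR r r') := by
  rintro x ⟨hp, hn⟩
  rcases hn with (((⟨a, _, hEq⟩ | ⟨a, _, hEq⟩) | ⟨a, _, hna, hEq⟩) | ⟨d, hEq⟩) <;>
    try simp at hEq
  subst hEq
  exact hna (mem_SofRR_primed.1 hp)

end SofRRLemmas

section GoodModel

variable {r : Instance Pred D ar} {IC : Set (BIC Pred D ar)}

lemma IofS_not_neg {S : Set (Lit (GAtom Pred D))} (h4 : Coherent S) {a : DBAtom Pred D}
    (hI : a ∈ IofS S) (hn : Lit.neg (GAtom.primed a.1 a.2) ∈ S) : False := by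
  rcases mem_IofS.1 hI with hp | ⟨_, hnn⟩
  · exact h4 (GAtom.primed a.1 a.2) ⟨hp, hn⟩
  · exact hnn hn

/-- Models of `Π*` with the right base and domain atoms induce consistent instances. -/
lemma good_model_sat {S : Set (Lit (GAtom Pred D))}
    (h1 : SatProg S (Pstar r IC))
    (h2 : posBaseOf S = r.atoms)
    (h3 : ∀ d : D, Lit.pos (GAtom.dom d) ∈ S)
    (h4 : Coherent S) :
    SatSet (IofS S) IC := by
  have hbase : ∀ p t, Lit.pos (GAtom.base p t) ∈ S ↔ (p, t) ∈ r.atoms := by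
    intro p t
    exact ⟨fun hx => h2 ▸ hx, fun hx => by
      have : (p, t) ∈ posBaseOf S := h2 ▸ hx
      exact this⟩
  intro c hc ν
  by_contra hviol
  rw [BIC.holdsAt] at hviol
  push_neg at hviol
  obtain ⟨hpos, hviol'⟩ := hviol
  obtain ⟨hneg, hb⟩ := hviol'
  -- the empty nbody condition
  have hemp : ∀ (S' : Set (Lit (GAtom Pred D))), ∀ L ∈ (∅ : Set (Lit (GAtom Pred D))), L ∉ S' :=
    fun _ L hL => absurd hL (Set.notMem_empty L)
  -- dom atoms are in S
  have hdom : ∀ (V : Set (Fin c.nvars)), domBody (Pred := Pred) ν V ⊆ S := by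
    rintro V L ⟨v, _, rfl⟩; exact h3 (ν v)
  by_cases hpr : ∀ a ∈ c.pos, (a.1, a.2.map ν) ∉ r.atoms
  · by_cases hnr : ∀ a ∈ c.neg, (a.1, a.2.map ν) ∈ r.atoms
    · -- the triggering rule fires
      obtain ⟨L, hLh, hLS⟩ := h1 _ (trig_mem_Pstar hc hb hpr) (by
        rintro L (hL | ⟨a, ha, rfl⟩)
        · exact hdom _ hL
        · exact (hbase _ _).2 (hnr a ha)) (hemp S)
      rcases hLh with ⟨a, ha, rfl⟩ | ⟨a, ha, rfl⟩
      · exact hpos a ha (mem_IofS.2 (Or.inl hLS))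
      · exact IofS_not_neg h4 (hneg a ha) hLS
    · push_neg at hnr
      obtain ⟨b, hbmem, hbr⟩ := hnr
      have hq : Lit.pos (GAtom.primed b.1 (b.2.map ν)) ∈ S := by
        rcases mem_IofS.1 (hneg b hbmem) with hp | ⟨hbS, _⟩
        · exact hp
        · exact absurd ((hbase _ _).1 hbS) hbr
      obtain ⟨j, hj⟩ := List.mem_iff_get.1 hbmem
      obtain ⟨L, hLh, hLS⟩ := h1 _ (stabNeg_mem_Pstar hc hb j) (by
        rintro L (hL | hL)
        · exact hdom _ hL
        · rcases hL with rfl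
          rw [hj]; exact hq) (hemp S)
      rcases hLh with ⟨a, ha, rfl⟩ | ⟨i, _, rfl⟩
      · exact hpos a ha (mem_IofS.2 (Or.inl hLS))
      · exact IofS_not_neg h4 (hneg _ (List.get_mem c.neg i)) hLS
  · push_neg at hpr
    obtain ⟨b, hbmem, hbr⟩ := hpr
    have hq : Lit.neg (GAtom.primed b.1 (b.2.map ν)) ∈ S := by
      have := hpos b hbmem
      rw [mem_IofS] at this
      push_neg at this
      exact this.2 ((hbase _ _).2 hbr)
    obtain ⟨j, hj⟩ := List.mem_iff_get.1 hbmem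
    obtain ⟨L, hLh, hLS⟩ := h1 _ (stabPos_mem_Pstar hc hb j) (by
      rintro L (hL | hL)
      · exact hdom _ hL
      · rcases hL with rfl
        rw [hj]; exact hq) (hemp S)
    rcases hLh with ⟨i, _, rfl⟩ | ⟨a, ha, rfl⟩
    · exact hpos _ (List.get_mem c.pos i) (mem_IofS.2 (Or.inl hLS))
    · exact IofS_not_neg h4 (hneg a ha) hLS

end GoodModel

section Structure

variable {r r' : Instance Pred D ar} {IC : Set (BIC Pred D ar)}

lemma emptyNb {S : Set (Lit (GAtom Pred D))} :
    ∀ L ∈ (∅ : Set (Lit (GAtom Pred D))), L ∉ S :=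
  fun L hL => absurd hL (Set.notMem_empty L)

/-- Structural properties of any answer set of the change program. -/
lemma answerSet_structure {S : Set (Lit (GAtom Pred D))}
    (hS : AnswerSet S (changeProg r IC)) :
    posBaseOf S = r.atoms ∧ (∀ d : D, Lit.pos (GAtom.dom d) ∈ S) ∧
    (∀ p t, Lit.pos (GAtom.primed p t) ∈ S → t.length = ar p) ∧
    (∀ p t, Lit.neg (GAtom.primed p t) ∈ S → t.length = ar p) ∧
    SatProg S (Pstar r IC) := by
  obtain ⟨hcoh, hsat, hmin⟩ := hS
  have hfacts : ∀ a ∈ r.atoms, Lit.pos (GAtom.base a.1 a.2) ∈ S := by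
    intro a ha
    have hm : Rule.mk {Lit.pos (GAtom.base a.1 a.2)} ∅ ∅ ∈ reduct (changeProg r IC) S :=
      ⟨_, fact_base_mem ha, emptyNb, rfl⟩
    obtain ⟨L, hLh, hLS⟩ := hsat _ hm (Set.empty_subset S) emptyNb
    rcases hLh with rfl
    exact hLS
  have hdomS : ∀ d : D, Lit.pos (GAtom.dom d) ∈ S := by
    intro d
    have hm : Rule.mk {Lit.pos (GAtom.dom d)} ∅ ∅ ∈ reduct (changeProg r IC) S :=
      ⟨_, fact_dom_mem d, emptyNb, rfl⟩
    obtain ⟨L, hLh, hLS⟩ := hsat _ hm (Set.empty_subset S) emptyNb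
    rcases hLh with rfl
    exact hLS
  have hgood : S ⊆ goodLits r := by
    have heq : S ∩ goodLits r = S := by
      apply hmin _ Set.inter_subset_left
      rintro R' ⟨R, hRp, hn, rfl⟩ hbody hnb
      obtain ⟨L, hLh, hLS⟩ := hsat _ ⟨R, hRp, hn, rfl⟩
        (hbody.trans Set.inter_subset_left) emptyNb
      exact ⟨L, hLh, hLS, head_subset_good hRp hLh⟩
    rw [← heq]
    exact Set.inter_subset_right
  have h2 : posBaseOf S = r.atoms := by
    ext a
    constructor
    · intro hx
      rcases hgood hx with ((⟨b, hb, hEq⟩ | ⟨d, hEq⟩) | ⟨p, t, _, (hEq | hEq)⟩) <;>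
        first
        | (obtain ⟨h1, h2⟩ : a.1 = b.1 ∧ a.2 = b.2 := by simpa using hEq
           have : a = b := Prod.ext h1 h2
           rw [this]; exact hb)
        | simp at hEq
    · intro hx; exact hfacts a hx
  refine ⟨h2, hdomS, ?_, ?_, ?_⟩
  · intro p t hx
    rcases hgood hx with ((⟨b, _, hEq⟩ | ⟨d, hEq⟩) | ⟨p', t', hlen, (hEq | hEq)⟩) <;>
      try simp at hEq
    obtain ⟨h1, h2⟩ := hEq
    subst h1; subst h2; exact hlen
  · intro p t hx
    rcases hgood hx with ((⟨b, _, hEq⟩ | ⟨d, hEq⟩) | ⟨p', t', hlen, (hEq | hEq)⟩) <;>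
      try simp at hEq
    obtain ⟨h1, h2⟩ := hEq
    subst h1; subst h2; exact hlen
  · have hbaseiff : ∀ p t, Lit.pos (GAtom.base p t) ∈ S ↔ (p, t) ∈ r.atoms := by
      intro p t
      constructor
      · intro hx
        have : (p, t) ∈ posBaseOf S := hx
        rw [h2] at this; exact this
      · intro hx
        have : (p, t) ∈ posBaseOf S := h2 ▸ hx
        exact this
    rw [← reduct_changeProg_eq hbaseiff]
    exact hsat

/-- `S(r,r')` is a model of `Π*` whenever `r' ⊨ IC`. -/
lemma SofRR_sat (hr' : SatIC r' IC) : SatProg (SofRR r r') (Pstar r IC) := by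
  rintro R' ⟨R, hR, hnb, rfl⟩ hbody hnbS
  rcases hR with ((((⟨a, ha, rfl⟩ | ⟨d, _, rfl⟩) | ⟨c, hc, ν, _, hbν, rfl⟩) |
    ⟨c, hc, ν, _, hbν, j, rfl⟩) | ⟨c, hc, ν, _, hbν, j, rfl⟩)
  · exact ⟨_, rfl, mem_SofRR_base.2 ha⟩
  · exact ⟨_, rfl, mem_SofRR_dom d⟩
  · -- triggering rule
    rcases hr' c hc ν with ⟨a, ha, hmem⟩ | ⟨a, ha, hmem⟩ | hbi
    · exact ⟨_, Or.inl ⟨a, ha, rfl⟩, mem_SofRR_primed.2 hmem⟩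
    · exact ⟨_, Or.inr ⟨a, ha, rfl⟩,
        mem_SofRR_negprimed.2 ⟨by simpa using c.wfneg a ha, hmem⟩⟩
    · exact absurd hbi hbν
  · -- stabilizing rule for a positive literal
    have hx := hbody (Set.mem_union_right _ rfl)
    obtain ⟨_, hnj⟩ := mem_SofRR_negprimed.1 hx
    rcases hr' c hc ν with ⟨a, ha, hmem⟩ | ⟨a, ha, hmem⟩ | hbi
    · obtain ⟨i, hi⟩ := List.mem_iff_get.1 ha
      have hij : i ≠ j := by
        rintro rfl
        rw [hi] at hnj
        exact hnj hmem
      exact ⟨_, Or.inl ⟨i, hij, rfl⟩, mem_SofRR_primed.2 (by rw [hi]; exact hmem)⟩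
    · exact ⟨_, Or.inr ⟨a, ha, rfl⟩,
        mem_SofRR_negprimed.2 ⟨by simpa using c.wfneg a ha, hmem⟩⟩
    · exact absurd hbi hbν
  · -- stabilizing rule for a negative literal
    have hx := hbody (Set.mem_union_right _ rfl)
    have hj' := mem_SofRR_primed.1 hx
    rcases hr' c hc ν with ⟨a, ha, hmem⟩ | ⟨a, ha, hmem⟩ | hbi
    · exact ⟨_, Or.inl ⟨a, ha, rfl⟩, mem_SofRR_primed.2 hmem⟩
    · obtain ⟨i, hi⟩ := List.mem_iff_get.1 ha
      have hij : i ≠ j := by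
        rintro rfl
        rw [hi] at hj'
        exact hmem hj'
      exact ⟨_, Or.inr ⟨i, hij, rfl⟩,
        mem_SofRR_negprimed.2 ⟨by simpa using c.wfneg _ (List.get_mem c.neg i), by
          rw [hi]; exact hmem⟩⟩
    · exact absurd hbi hbν

/-- Build the instance corresponding to `IofS S`. -/
lemma build_instance [Finite Pred] [Finite D] {S : Set (Lit (GAtom Pred D))}
    (h2 : posBaseOf S = r.atoms)
    (h5p : ∀ p t, Lit.pos (GAtom.primed p t) ∈ S → t.length = ar p) :
    ∃ inst : Instance Pred D ar, inst.atoms = IofS S := by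
  refine ⟨⟨IofS S, ?_, ?_⟩, rfl⟩
  · apply Set.Finite.subset (r.finite.union WFat_finite)
    intro a ha
    rcases mem_IofS.1 ha with hp | ⟨hb, _⟩
    · exact Or.inr (h5p _ _ hp)
    · left
      have : a ∈ posBaseOf S := hb
      rw [h2] at this; exact this
  · intro a ha
    rcases mem_IofS.1 ha with hp | ⟨hb, _⟩
    · exact h5p _ _ hp
    · have : a ∈ posBaseOf S := hb
      rw [h2] at this
      exact r.wf a this

/-- The violated weak constraints are exactly the symmetric difference. -/
lemma weakViol_eq {S : Set (Lit (GAtom Pred D))} (hcoh : Coherent S)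
    (h2 : posBaseOf S = r.atoms)
    (h5p : ∀ p t, Lit.pos (GAtom.primed p t) ∈ S → t.length = ar p)
    (h5n : ∀ p t, Lit.neg (GAtom.primed p t) ∈ S → t.length = ar p) :
    weakViol ar S = (fun a => ((true : Bool), a)) '' (IofS S \ r.atoms) ∪
      (fun a => ((false : Bool), a)) '' (r.atoms \ IofS S) := by
  have hbaseiff : ∀ a : DBAtom Pred D, Lit.pos (GAtom.base a.1 a.2) ∈ S ↔ a ∈ r.atoms := by
    intro a
    constructor
    · intro hx
      have : a ∈ posBaseOf S := hx
      rw [h2] at this; exact this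
    · intro hx
      have : a ∈ posBaseOf S := h2 ▸ hx
      exact this
  ext ⟨b, a⟩
  simp only [weakViol, Set.mem_setOf_eq, Set.mem_union, Set.mem_image, Set.mem_diff,
    Prod.mk.injEq]
  constructor
  · rintro ⟨hwf, ⟨hb, hp, hnb⟩ | ⟨hb, hn, hbS⟩⟩
    · subst hb
      exact Or.inl ⟨a, ⟨mem_IofS.2 (Or.inl hp),
        fun har => hnb ((hbaseiff a).2 har)⟩, rfl, rfl⟩
    · subst hb
      refine Or.inr ⟨a, ⟨(hbaseiff a).1 hbS, fun hI => ?_⟩, rfl, rfl⟩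
      exact IofS_not_neg hcoh hI hn
  · rintro (⟨x, ⟨hI, hnr⟩, hb, rfl⟩ | ⟨x, ⟨hr, hnI⟩, hb, rfl⟩)
    · subst hb
      rcases mem_IofS.1 hI with hp | ⟨hbS, _⟩
      · exact ⟨h5p _ _ hp, Or.inl ⟨rfl, hp, fun hbS => hnr ((hbaseiff x).1 hbS)⟩⟩
      · exact absurd ((hbaseiff x).1 hbS) hnr
    · subst hb
      refine ⟨r.wf x hr, Or.inr ⟨rfl, ?_, (hbaseiff x).2 hr⟩⟩
      by_contra hn
      exact hnI (mem_IofS.2 (Or.inr ⟨(hbaseiff x).2 hr, hn⟩))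

lemma weakViol_ncard [Finite Pred] [Finite D] {S : Set (Lit (GAtom Pred D))}
    (hcoh : Coherent S) (h2 : posBaseOf S = r.atoms)
    (h5p : ∀ p t, Lit.pos (GAtom.primed p t) ∈ S → t.length = ar p)
    (h5n : ∀ p t, Lit.neg (GAtom.primed p t) ∈ S → t.length = ar p) :
    (weakViol ar S).ncard = (symmDiff r.atoms (IofS S)).ncard := by
  have hAfin : (IofS S \ r.atoms).Finite := by
    apply WFat_finite.subset
    intro a ⟨hI, hnr⟩
    rcases mem_IofS.1 hI with hp | ⟨hbS, _⟩
    · exact h5p _ _ hp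
    · have : a ∈ posBaseOf S := hbS
      rw [h2] at this
      exact absurd this hnr
  have hBfin : (r.atoms \ IofS S).Finite := r.finite.subset Set.diff_subset
  have hinj1 : Function.Injective (fun a : DBAtom Pred D => ((true : Bool), a)) := by
    intro x y hxy; simpa using hxy
  have hinj2 : Function.Injective (fun a : DBAtom Pred D => ((false : Bool), a)) := by
    intro x y hxy; simpa using hxy
  have hdisj : Disjoint ((fun a : DBAtom Pred D => ((true : Bool), a)) '' (IofS S \ r.atoms))
      ((fun a : DBAtom Pred D => ((false : Bool), a)) '' (r.atoms \ IofS S)) := by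
    rw [Set.disjoint_left]
    rintro x ⟨y, _, rfl⟩ ⟨z, _, hz⟩
    simp at hz
  rw [weakViol_eq hcoh h2 h5p h5n,
    Set.ncard_union_eq hdisj (hAfin.image _) (hBfin.image _),
    Set.ncard_image_of_injective _ hinj1, Set.ncard_image_of_injective _ hinj2,
    Set.symmDiff_def,
    Set.ncard_union_eq disjoint_sdiff_sdiff hBfin hAfin, Nat.add_comm]

end Structure

end Aux

/-- Theorem `td`, part 1. Let `r` be a database instance over
a finite domain `D` and `IC` a set of binary integrity constraints. For every
Dalal repair `r'` of `r` wrt `IC`, there exists an answer set `S` of the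
program `Π^D(r)` such that `I(S) = r'`. -/
theorem statement9 {Pred D : Type} [Finite Pred] [Finite D] {ar : Pred → ℕ}
    (r r' : Instance Pred D ar) (IC : Set (BIC Pred D ar))
    (h : IsDalalRepair r r' IC) :
    ∃ S : Set (Lit (GAtom Pred D)), DalalAnswerSet r IC S ∧ IofS S = r'.atoms := by
  classical
  obtain ⟨hr'IC, hmin'⟩ := h
  set T := SofRR r r' with hTdef
  -- T is finite
  have hTfin : T.Finite := by
    have h1 : {L : Lit (GAtom Pred D) | ∃ a ∈ r.atoms,
        L = Lit.pos (GAtom.base a.1 a.2)}.Finite := by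
      apply (r.finite.image (fun a => Lit.pos (GAtom.base a.1 a.2))).subset
      rintro L ⟨a, ha, rfl⟩; exact ⟨a, ha, rfl⟩
    have h2 : {L : Lit (GAtom Pred D) | ∃ a ∈ r'.atoms,
        L = Lit.pos (GAtom.primed a.1 a.2)}.Finite := by
      apply (r'.finite.image (fun a => Lit.pos (GAtom.primed a.1 a.2))).subset
      rintro L ⟨a, ha, rfl⟩; exact ⟨a, ha, rfl⟩
    have h3 : {L : Lit (GAtom Pred D) | ∃ a : DBAtom Pred D, a.2.length = ar a.1 ∧
        a ∉ r'.atoms ∧ L = Lit.neg (GAtom.primed a.1 a.2)}.Finite := by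
      apply ((WFat_finite (ar := ar)).image (fun a => Lit.neg (GAtom.primed a.1 a.2))).subset
      rintro L ⟨a, hlen, _, rfl⟩; exact ⟨a, hlen, rfl⟩
    have h4 : {L : Lit (GAtom Pred D) | ∃ d : D, L = Lit.pos (GAtom.dom d)}.Finite := by
      apply ((Set.finite_univ (α := D)).image (fun d => Lit.pos (GAtom.dom d))).subset
      rintro L ⟨d, rfl⟩; exact ⟨d, Set.mem_univ d, rfl⟩
    exact ((h1.union h2).union h3).union h4
  have hTsat : SatProg T (Pstar r IC) := SofRR_sat hr'IC
  -- choose a model of Pstar inside T of minimal cardinality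
  set 𝓜 : Set (Set (Lit (GAtom Pred D))) := {S | S ⊆ T ∧ SatProg S (Pstar r IC)} with h𝓜
  have hTm : T ∈ 𝓜 := ⟨subset_rfl, hTsat⟩
  have hNne : (Set.ncard '' 𝓜).Nonempty := ⟨T.ncard, T, hTm, rfl⟩
  obtain ⟨M, hM𝓜, hMcard⟩ := Nat.sInf_mem hNne
  obtain ⟨hMT, hMsat⟩ := hM𝓜
  have hMfin : M.Finite := hTfin.subset hMT
  have hminM : ∀ S' ⊆ M, SatProg S' (Pstar r IC) → S' = M := by
    intro S' hsub hsat'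
    refine Set.eq_of_subset_of_ncard_le hsub ?_ hMfin
    rw [hMcard]
    exact Nat.sInf_le ⟨S', ⟨hsub.trans hMT, hsat'⟩, rfl⟩
  -- structural properties of M
  have hMcoh : Coherent M := fun x hx => SofRR_coherent x ⟨hMT hx.1, hMT hx.2⟩
  have hfacts : ∀ a ∈ r.atoms, Lit.pos (GAtom.base a.1 a.2) ∈ M := by
    intro a ha
    obtain ⟨L, hLh, hLS⟩ := hMsat _ (fact_base_mem_Pstar ha) (Set.empty_subset M) emptyNb
    rcases hLh with rfl
    exact hLS
  have hdomM : ∀ d : D, Lit.pos (GAtom.dom d) ∈ M := by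
    intro d
    obtain ⟨L, hLh, hLS⟩ := hMsat _ (fact_dom_mem_Pstar d) (Set.empty_subset M) emptyNb
    rcases hLh with rfl
    exact hLS
  have h2M : posBaseOf M = r.atoms := by
    ext a
    constructor
    · intro hx
      exact mem_SofRR_base.1 (hMT hx)
    · intro hx
      exact hfacts a hx
  have hbaseiff : ∀ p t, Lit.pos (GAtom.base p t) ∈ M ↔ (p, t) ∈ r.atoms := by
    intro p t
    constructor
    · intro hx
      have : (p, t) ∈ posBaseOf M := hx
      rw [h2M] at this; exact this
    · intro hx
      have : (p, t) ∈ posBaseOf M := h2M ▸ hx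
      exact this
  have h5pM : ∀ p t, Lit.pos (GAtom.primed p t) ∈ M → t.length = ar p := by
    intro p t hx
    exact r'.wf _ (mem_SofRR_primed.1 (hMT hx))
  have h5nM : ∀ p t, Lit.neg (GAtom.primed p t) ∈ M → t.length = ar p := by
    intro p t hx
    exact (mem_SofRR_negprimed.1 (hMT hx)).1
  -- M is an answer set of the change program
  have hred : reduct (changeProg r IC) M = Pstar r IC := reduct_changeProg_eq hbaseiff
  have hAS : AnswerSet M (changeProg r IC) := by
    refine ⟨hMcoh, ?_, ?_⟩
    · rw [hred]; exact hMsat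
    · intro S' hsub hsat'
      exact hminM S' hsub (by rw [← hred]; exact hsat')
  -- `I(M)` is consistent, hence equals r' by Dalal minimality
  have hsatIC : SatSet (IofS M) IC := good_model_sat hMsat h2M hdomM hMcoh
  obtain ⟨instM, hinstM⟩ := build_instance h2M h5pM
  have hsub : symmDiff r.atoms (IofS M) ⊆ symmDiff r.atoms r'.atoms := by
    rw [Set.symmDiff_def, Set.symmDiff_def]
    rintro x (⟨hxr, hxI⟩ | ⟨hxI, hxr⟩)
    · left
      refine ⟨hxr, fun hxr' => hxI (mem_IofS.2 (Or.inr ⟨hfacts x hxr, fun hn => ?_⟩))⟩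
      exact (mem_SofRR_negprimed.1 (hMT hn)).2 hxr'
    · right
      rcases mem_IofS.1 hxI with hp | ⟨hb, _⟩
      · exact ⟨mem_SofRR_primed.1 (hMT hp), hxr⟩
      · exact absurd ((hbaseiff _ _).1 hb) hxr
  have hΔfin : (symmDiff r.atoms r'.atoms).Finite := by
    rw [Set.symmDiff_def]
    exact (r.finite.subset Set.diff_subset).union (r'.finite.subset Set.diff_subset)
  have hcard' : (symmDiff r.atoms r'.atoms).ncard ≤ (symmDiff r.atoms (IofS M)).ncard := by
    have := hmin' instM (by rw [SatIC, hinstM]; exact hsatIC)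
    rw [hinstM] at this
    exact this
  have hΔeq : symmDiff r.atoms (IofS M) = symmDiff r.atoms r'.atoms :=
    Set.eq_of_subset_of_ncard_le hsub hcard' hΔfin
  have hIM : IofS M = r'.atoms := symmDiff_right_injective r.atoms hΔeq
  -- M minimizes the number of violated weak constraints
  refine ⟨M, ⟨hAS, ?_⟩, hIM⟩
  intro S' hS'
  obtain ⟨h2', hdom', h5p', h5n', hsat'⟩ := answerSet_structure hS'
  have hcoh' := hS'.1
  have hIC' : SatSet (IofS S') IC := good_model_sat hsat' h2' hdom' hcoh'
  obtain ⟨inst', hinst'⟩ := build_instance h2' h5p'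
  have hD : (symmDiff r.atoms r'.atoms).ncard ≤ (symmDiff r.atoms (IofS S')).ncard := by
    have := hmin' inst' (by rw [SatIC, hinst']; exact hIC')
    rw [hinst'] at this
    exact this
  rw [weakViol_ncard hMcoh h2M h5pM h5nM, weakViol_ncard hcoh' h2' h5p' h5n', hIM]
  exact hD

end CQA
end

section
/- Let r be a database instance over a finite domain D and IC a set of binary integrity constraints. For every answer set S of the program Π^D(r), the instance I(S) is a Dalal repair of r wrt IC. -/
namespace CQA

variable {Pred D : Type} {ar : Pred → ℕ}

/-!
An answer set `S` of `Π_Δ(r)` is supported by rule heads, so its unprimed atoms are exactly the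
atoms of `r`. If a ground constraint failed in `I(S)`, then either a stabilizing rule (when some
`¬p′` or `q′` is in `S`) or the triggering rule would fire with a head disjoint from `S`. The
violated weak constraints of `S` correspond one-to-one to `Δ(r, I(S))`.

Conversely, for any `r'' ⊨ IC` the set `S(r, r'')` is a finite model of its own reduct, and any
minimal submodel `M` of it is an answer set of `Π_Δ(r)`: `M` still contains the facts of `r`, and
the reduct only looks at unprimed atoms. The violated weak constraints of `M` inject into
`Δ(r, r'')`, so the weak-constraint minimality of `S` gives `|Δ(r, I(S))| ≤ |Δ(r, r'')|`.
-/

section AnswerSets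

variable {α : Type} {P : Program α} {S T U : Set (Lit α)}

theorem SatProg.exists_head_mem_of_reduct (h : SatProg T (reduct P U)) {R : Rule α}
    (hR : R ∈ P) (hn : ∀ L ∈ R.nbody, L ∉ U) (hb : R.body ⊆ T) : ∃ L ∈ R.head, L ∈ T :=
  h ⟨R.head, R.body, ∅⟩ ⟨R, hR, hn, rfl⟩ hb fun _ h => h.elim

theorem SatProg.mem_of_fact_mem (h : SatProg T (reduct P U)) {L : Lit α} (hL : fact L ∈ P) :
    L ∈ T := by
  obtain ⟨L', rfl, hL'⟩ :=
    h.exists_head_mem_of_reduct hL (fun _ h => h.elim) (Set.empty_subset T)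
  exact hL'

theorem reduct_congr {S₁ S₂ : Set (Lit α)} (h : ∀ R ∈ P, ∀ L ∈ R.nbody, L ∈ S₁ ↔ L ∈ S₂) :
    reduct P S₁ = reduct P S₂ := by
  ext R'
  constructor <;> rintro ⟨R, hR, hn, rfl⟩
  · exact ⟨R, hR, fun L hL => (h R hR L hL).not.mp (hn L hL), rfl⟩
  · exact ⟨R, hR, fun L hL => (h R hR L hL).not.mpr (hn L hL), rfl⟩

theorem AnswerSet.forall_mem_of_forall_head {Q : Lit α → Prop} (hS : AnswerSet S P)
    (hQ : ∀ R ∈ P, ∀ L ∈ R.head, Q L) : ∀ L ∈ S, Q L := by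
  have hmodel : SatProg {L | L ∈ S ∧ Q L} (reduct P S) := by
    rintro _ ⟨R, hR, hn, rfl⟩ hb -
    obtain ⟨L, hL, hLS⟩ := hS.2.1.exists_head_mem_of_reduct hR hn fun _ h => (hb h).1
    exact ⟨L, hL, hLS, hQ R hR L hL⟩
  intro L hL
  rw [← hS.2.2 _ (fun _ hL => hL.1) hmodel] at hL
  exact hL.2

theorem exists_answerSet_subset (hU : Coherent U) (hfin : U.Finite)
    (hsat : SatProg U (reduct P U))
    (hred : ∀ M ⊆ U, SatProg M (reduct P U) → reduct P M = reduct P U) :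
    ∃ M ⊆ U, AnswerSet M P := by
  have hfin' : {M | M ⊆ U ∧ SatProg M (reduct P U)}.Finite :=
    hfin.finite_subsets.subset fun _ hM => hM.1
  obtain ⟨M, -, ⟨hMU, hM⟩, hmin⟩ := hfin'.exists_le_minimal ⟨subset_rfl, hsat⟩
  refine ⟨M, hMU, fun a ha => hU a ⟨hMU ha.1, hMU ha.2⟩, hred M hMU hM ▸ hM, ?_⟩
  intro S' hS' hsat'
  rw [hred M hMU hM] at hsat'
  exact (hmin ⟨hS'.trans hMU, hsat'⟩ hS').antisymm' hS'

end AnswerSets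

section ChangeProgram

variable {r : Instance Pred D ar} {IC : Set (BIC Pred D ar)} {R : Rule (GAtom Pred D)}
  {T U : Set (Lit (GAtom Pred D))}

theorem mem_changeProg : R ∈ changeProg r IC ↔
      (∃ a ∈ r.atoms, R = fact (Lit.pos (GAtom.base a.1 a.2))) ∨
      (∃ d : D, R = fact (Lit.pos (GAtom.dom d))) ∨
      (∃ c ∈ IC, ∃ ν : Fin c.nvars → D, ¬ c.builtin ν ∧ R = trigRule c ν) ∨
      (∃ c ∈ IC, ∃ ν : Fin c.nvars → D, ¬ c.builtin ν ∧
        ∃ j : Fin c.pos.length, R = stabPosRule c ν j) ∨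
      (∃ c ∈ IC, ∃ ν : Fin c.nvars → D, ¬ c.builtin ν ∧
        ∃ j : Fin c.neg.length, R = stabNegRule c ν j) := by
  simp only [changeProg, changeProgOn, Set.mem_union, Set.mem_ofPred_eq, Set.mem_univ,
    true_and, implies_true, or_assoc]

theorem trigRule_mem_changeProg {c : BIC Pred D ar} (hc : c ∈ IC) {ν : Fin c.nvars → D}
    (hν : ¬ c.builtin ν) : trigRule c ν ∈ changeProg r IC :=
  mem_changeProg.mpr (Or.inr (Or.inr (Or.inl ⟨c, hc, ν, hν, rfl⟩)))

theorem stabPosRule_mem_changeProg {c : BIC Pred D ar} (hc : c ∈ IC) {ν : Fin c.nvars → D}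
    (hν : ¬ c.builtin ν) (j : Fin c.pos.length) : stabPosRule c ν j ∈ changeProg r IC :=
  mem_changeProg.mpr (Or.inr (Or.inr (Or.inr (Or.inl ⟨c, hc, ν, hν, j, rfl⟩))))

theorem stabNegRule_mem_changeProg {c : BIC Pred D ar} (hc : c ∈ IC) {ν : Fin c.nvars → D}
    (hν : ¬ c.builtin ν) (j : Fin c.neg.length) : stabNegRule c ν j ∈ changeProg r IC :=
  mem_changeProg.mpr (Or.inr (Or.inr (Or.inr (Or.inr ⟨c, hc, ν, hν, j, rfl⟩))))

theorem stabPosRule_head_subset (c : BIC Pred D ar) (ν : Fin c.nvars → D)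
    (j : Fin c.pos.length) : (stabPosRule c ν j).head ⊆ (trigRule c ν).head := by
  rintro L (⟨i, -, rfl⟩ | hL)
  · exact Or.inl ⟨_, List.get_mem c.pos i, rfl⟩
  · exact Or.inr hL

theorem stabNegRule_head_subset (c : BIC Pred D ar) (ν : Fin c.nvars → D)
    (j : Fin c.neg.length) : (stabNegRule c ν j).head ⊆ (trigRule c ν).head := by
  rintro L (hL | ⟨i, -, rfl⟩)
  · exact Or.inl hL
  · exact Or.inr ⟨_, List.get_mem c.neg i, rfl⟩

theorem mem_stabPosRule_head {c : BIC Pred D ar} {ν : Fin c.nvars → D} {j : Fin c.pos.length}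
    {L : Lit (GAtom Pred D)} (hL : L ∈ (trigRule c ν).head)
    (hne : L ≠ Lit.pos (GAtom.primed (c.pos.get j).1 ((c.pos.get j).2.map ν))) :
    L ∈ (stabPosRule c ν j).head := by
  rcases hL with ⟨a, ha, rfl⟩ | hL
  · obtain ⟨i, rfl⟩ := List.get_of_mem ha
    exact Or.inl ⟨i, by rintro rfl; exact hne rfl, rfl⟩
  · exact Or.inr hL

theorem mem_stabNegRule_head {c : BIC Pred D ar} {ν : Fin c.nvars → D} {j : Fin c.neg.length}
    {L : Lit (GAtom Pred D)} (hL : L ∈ (trigRule c ν).head)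
    (hne : L ≠ Lit.neg (GAtom.primed (c.neg.get j).1 ((c.neg.get j).2.map ν))) :
    L ∈ (stabNegRule c ν j).head := by
  rcases hL with hL | ⟨a, ha, rfl⟩
  · exact Or.inl hL
  · obtain ⟨i, rfl⟩ := List.get_of_mem ha
    exact Or.inr ⟨i, by rintro rfl; exact hne rfl, rfl⟩

theorem SatProg.base_mem (h : SatProg T (reduct (changeProg r IC) U)) {a : DBAtom Pred D}
    (ha : a ∈ r.atoms) : Lit.pos (GAtom.base a.1 a.2) ∈ T :=
  h.mem_of_fact_mem (mem_changeProg.mpr (Or.inl ⟨a, ha, rfl⟩))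

theorem SatProg.dom_mem (h : SatProg T (reduct (changeProg r IC) U)) (d : D) :
    Lit.pos (GAtom.dom d) ∈ T :=
  h.mem_of_fact_mem (mem_changeProg.mpr (Or.inr (Or.inl ⟨d, rfl⟩)))

def Admissible (r : Instance Pred D ar) : Lit (GAtom Pred D) → Prop
  | .pos (.base p t) => (p, t) ∈ r.atoms
  | .pos (.primed p t) => t.length = ar p
  | _ => True

theorem admissible_of_mem_head (hR : R ∈ changeProg r IC) :
    ∀ L ∈ R.head, Admissible r L := by
  have hpos (c : BIC Pred D ar) (ν : Fin c.nvars → D) :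
      ∀ L ∈ (trigRule c ν).head, Admissible r L := by
    rintro L (⟨a, ha, rfl⟩ | ⟨a, ha, rfl⟩)
    · simpa [Admissible] using c.wfpos a ha
    · trivial
  rcases mem_changeProg.mp hR with ⟨a, ha, rfl⟩ | ⟨d, rfl⟩ | ⟨c, -, ν, -, rfl⟩ |
    ⟨c, -, ν, -, j, rfl⟩ | ⟨c, -, ν, -, j, rfl⟩
  · rintro L rfl; exact ha
  · rintro L rfl; trivial
  · exact hpos c ν
  · exact fun L hL => hpos c ν L (stabPosRule_head_subset c ν j hL)
  · exact fun L hL => hpos c ν L (stabNegRule_head_subset c ν j hL)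

theorem reduct_changeProg_congr {S₁ S₂ : Set (Lit (GAtom Pred D))}
    (h : ∀ p t, Lit.pos (GAtom.base p t) ∈ S₁ ↔ Lit.pos (GAtom.base p t) ∈ S₂) :
    reduct (changeProg r IC) S₁ = reduct (changeProg r IC) S₂ := by
  refine reduct_congr fun R hR L hL => ?_
  rcases mem_changeProg.mp hR with ⟨a, -, rfl⟩ | ⟨d, rfl⟩ | ⟨c, -, ν, -, rfl⟩ |
    ⟨c, -, ν, -, j, rfl⟩ | ⟨c, -, ν, -, j, rfl⟩ <;> try exact hL.elim
  obtain ⟨a, -, rfl⟩ := hL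
  exact h _ _

end ChangeProgram

theorem finite_setOf_length_eq_arity [Finite Pred] [Finite D] :
    {a : DBAtom Pred D | a.2.length = ar a.1}.Finite :=
  (Set.finite_iUnion fun p => (List.finite_length_eq D (ar p)).image (Prod.mk p)).subset
    fun a ha => Set.mem_iUnion.mpr ⟨a.1, a.2, ha, rfl⟩

section WeakConstraints

variable {r : Instance Pred D ar} {S : Set (Lit (GAtom Pred D))}

theorem weakViol_injOn_snd (S : Set (Lit (GAtom Pred D))) :
    Set.InjOn Prod.snd (weakViol ar S) := by
  rintro ⟨b, a⟩ ⟨-, hx⟩ ⟨b', a'⟩ ⟨-, hy⟩ (h : a = a')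
  subst h
  rcases hx with ⟨rfl, -, hx⟩ | ⟨rfl, -, hx⟩ <;> rcases hy with ⟨rfl, -, hy⟩ | ⟨rfl, -, hy⟩
  exacts [rfl, (hx hy).elim, (hy hx).elim, rfl]

theorem snd_image_weakViol_subset {A : Set (DBAtom Pred D)}
    (hbase : ∀ p t, Lit.pos (GAtom.base p t) ∈ S ↔ (p, t) ∈ r.atoms)
    (hprimed : ∀ p t, Lit.pos (GAtom.primed p t) ∈ S → (p, t) ∈ A)
    (hnprimed : ∀ p t, Lit.neg (GAtom.primed p t) ∈ S → (p, t) ∉ A) :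
    Prod.snd '' weakViol ar S ⊆ symmDiff r.atoms A := by
  rintro _ ⟨⟨b, p, t⟩, ⟨-, ⟨-, hp, hb⟩ | ⟨-, hn, hb⟩⟩, rfl⟩
  · exact Set.mem_symmDiff.mpr (Or.inr ⟨hprimed p t hp, fun h => hb ((hbase p t).mpr h)⟩)
  · exact Set.mem_symmDiff.mpr (Or.inl ⟨(hbase p t).mp hb, hnprimed p t hn⟩)

end WeakConstraints

section AnswerSetsOfChangeProgram

variable {r : Instance Pred D ar} {IC : Set (BIC Pred D ar)} {S : Set (Lit (GAtom Pred D))}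

theorem AnswerSet.base_mem_iff (hS : AnswerSet S (changeProg r IC)) {p : Pred} {t : List D} :
    Lit.pos (GAtom.base p t) ∈ S ↔ (p, t) ∈ r.atoms :=
  ⟨hS.forall_mem_of_forall_head (fun _ => admissible_of_mem_head) _, hS.2.1.base_mem⟩

theorem AnswerSet.length_eq_of_primed_mem (hS : AnswerSet S (changeProg r IC)) {p : Pred}
    {t : List D} (h : Lit.pos (GAtom.primed p t) ∈ S) : t.length = ar p :=
  hS.forall_mem_of_forall_head (fun _ => admissible_of_mem_head) _ h

theorem AnswerSet.length_eq_of_mem_IofS (hS : AnswerSet S (changeProg r IC)) :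
    ∀ a ∈ IofS S, a.2.length = ar a.1 := by
  rintro a (h | ⟨h, -⟩)
  · exact hS.length_eq_of_primed_mem h
  · exact r.wf a (hS.base_mem_iff.mp h)

theorem AnswerSet.holdsAt_IofS (hS : AnswerSet S (changeProg r IC)) {c : BIC Pred D ar}
    (hc : c ∈ IC) (ν : Fin c.nvars → D) : c.holdsAt (IofS S) ν := by
  by_contra hfail
  simp only [BIC.holdsAt, not_or, not_exists, not_and, not_not] at hfail
  obtain ⟨hpos, hneg, hν⟩ := hfail
  obtain ⟨hcoh, hsat, -⟩ := hS
  have hhead : ∀ L ∈ (trigRule c ν).head, L ∉ S := by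
    rintro L (⟨a, ha, rfl⟩ | ⟨a, ha, rfl⟩) hL
    · exact hpos a ha (Or.inl hL)
    · rcases hneg a ha with h | ⟨-, h⟩
      exacts [hcoh _ ⟨h, hL⟩, h hL]
  have hdom : ∀ V, domBody ν V ⊆ S := by
    rintro V _ ⟨v, -, rfl⟩
    exact hsat.dom_mem _
  suffices ∃ L ∈ (trigRule c ν).head, L ∈ S by
    obtain ⟨L, hL, hLS⟩ := this
    exact hhead L hL hLS
  by_cases hp : ∃ j, Lit.neg (GAtom.primed (c.pos.get j).1 ((c.pos.get j).2.map ν)) ∈ S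
  · obtain ⟨j, hj⟩ := hp
    obtain ⟨L, hL, hLS⟩ := hsat.exists_head_mem_of_reduct (stabPosRule_mem_changeProg hc hν j)
      (fun _ h => h.elim) (Set.union_subset (hdom _) (Set.singleton_subset_iff.mpr hj))
    exact ⟨L, stabPosRule_head_subset c ν j hL, hLS⟩
  by_cases hq : ∃ j, Lit.pos (GAtom.primed (c.neg.get j).1 ((c.neg.get j).2.map ν)) ∈ S
  · obtain ⟨j, hj⟩ := hq
    obtain ⟨L, hL, hLS⟩ := hsat.exists_head_mem_of_reduct (stabNegRule_mem_changeProg hc hν j)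
      (fun _ h => h.elim) (Set.union_subset (hdom _) (Set.singleton_subset_iff.mpr hj))
    exact ⟨L, stabNegRule_head_subset c ν j hL, hLS⟩
  refine hsat.exists_head_mem_of_reduct (trigRule_mem_changeProg hc hν) ?_
    (Set.union_subset (hdom _) ?_)
  · rintro _ ⟨a, ha, rfl⟩ hb
    obtain ⟨j, rfl⟩ := List.get_of_mem ha
    exact hp ⟨j, by_contra fun hn => hpos _ ha (Or.inr ⟨hb, hn⟩)⟩
  · rintro _ ⟨a, ha, rfl⟩
    obtain ⟨j, rfl⟩ := List.get_of_mem ha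
    exact (Or.resolve_left (hneg _ ha) fun h => hq ⟨j, h⟩).1

theorem AnswerSet.snd_image_weakViol (hS : AnswerSet S (changeProg r IC)) :
    Prod.snd '' weakViol ar S = symmDiff r.atoms (IofS S) := by
  refine (snd_image_weakViol_subset (fun _ _ => hS.base_mem_iff) (fun _ _ h => Or.inl h)
    ?_).antisymm ?_
  · rintro p t hn (h | ⟨-, h⟩)
    exacts [hS.1 _ ⟨h, hn⟩, h hn]
  · rintro ⟨p, t⟩ (⟨hr, hI⟩ | ⟨hI, hr⟩)
    · have hb := hS.base_mem_iff.mpr hr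
      have hn : Lit.neg (GAtom.primed p t) ∈ S := by_contra fun h => hI (Or.inr ⟨hb, h⟩)
      exact ⟨(false, p, t), ⟨r.wf _ hr, Or.inr ⟨rfl, hn, hb⟩⟩, rfl⟩
    · have hb : Lit.pos (GAtom.base p t) ∉ S := fun h => hr (hS.base_mem_iff.mp h)
      have hp : Lit.pos (GAtom.primed p t) ∈ S := hI.resolve_right fun h => hb h.1
      exact ⟨(true, p, t), ⟨hS.length_eq_of_primed_mem hp, Or.inl ⟨rfl, hp, hb⟩⟩, rfl⟩

end AnswerSetsOfChangeProgram

section CanonicalModel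

variable {r r'' : Instance Pred D ar} {IC : Set (BIC Pred D ar)} {p : Pred} {t : List D}

theorem base_mem_SofRR : Lit.pos (GAtom.base p t) ∈ SofRR r r'' ↔ (p, t) ∈ r.atoms := by
  simp [SofRR, eq_comm]

theorem primed_mem_SofRR : Lit.pos (GAtom.primed p t) ∈ SofRR r r'' ↔ (p, t) ∈ r''.atoms := by
  simp [SofRR, eq_comm]

theorem neg_primed_mem_SofRR :
    Lit.neg (GAtom.primed p t) ∈ SofRR r r'' ↔ t.length = ar p ∧ (p, t) ∉ r''.atoms := by
  simp [SofRR, eq_comm]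

theorem coherent_SofRR : Coherent (SofRR r r'') := by
  rintro (_ | ⟨p, t⟩ | _) ⟨hpos, hneg⟩
  · simp [SofRR] at hneg
  · exact (neg_primed_mem_SofRR.mp hneg).2 (primed_mem_SofRR.mp hpos)
  · simp [SofRR] at hneg

theorem finite_SofRR [Finite Pred] [Finite D] : (SofRR r r'').Finite := by
  refine (((?_ : Set.Finite _).union ?_).union ?_).union ?_
  · exact (r.finite.image _).subset fun _ ⟨a, ha, h⟩ => ⟨a, ha, h.symm⟩
  · exact (r''.finite.image _).subset fun _ ⟨a, ha, h⟩ => ⟨a, ha, h.symm⟩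
  · exact (finite_setOf_length_eq_arity.image _).subset fun _ ⟨a, ha, _, h⟩ => ⟨a, ha, h.symm⟩
  · exact (Set.finite_range _).subset fun _ ⟨d, h⟩ => ⟨d, h.symm⟩

theorem exists_trigRule_head_mem_SofRR (h'' : SatIC r'' IC) {c : BIC Pred D ar} (hc : c ∈ IC)
    {ν : Fin c.nvars → D} (hν : ¬ c.builtin ν) :
    ∃ L ∈ (trigRule c ν).head, L ∈ SofRR r r'' := by
  rcases h'' c hc ν with ⟨a, ha, hm⟩ | ⟨a, ha, hm⟩ | hb
  · exact ⟨_, Or.inl ⟨a, ha, rfl⟩, primed_mem_SofRR.mpr hm⟩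
  · refine ⟨_, Or.inr ⟨a, ha, rfl⟩, neg_primed_mem_SofRR.mpr ⟨?_, hm⟩⟩
    simpa using c.wfneg a ha
  · exact (hν hb).elim

theorem satProg_SofRR (h'' : SatIC r'' IC) :
    SatProg (SofRR r r'') (reduct (changeProg r IC) (SofRR r r'')) := by
  rintro _ ⟨R, hR, -, rfl⟩ hb -
  rcases mem_changeProg.mp hR with ⟨a, ha, rfl⟩ | ⟨d, rfl⟩ | ⟨c, hc, ν, hν, rfl⟩ |
    ⟨c, hc, ν, hν, j, rfl⟩ | ⟨c, hc, ν, hν, j, rfl⟩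
  · exact ⟨_, rfl, base_mem_SofRR.mpr ha⟩
  · exact ⟨_, rfl, by simp [SofRR]⟩
  · exact exists_trigRule_head_mem_SofRR h'' hc hν
  · -- the head literal cannot be the removed one, whose complement is in the body
    obtain ⟨L, hL, hLS⟩ := exists_trigRule_head_mem_SofRR h'' hc hν
    refine ⟨L, mem_stabPosRule_head hL ?_, hLS⟩
    rintro rfl
    exact coherent_SofRR _ ⟨hLS, hb (Or.inr rfl)⟩
  · obtain ⟨L, hL, hLS⟩ := exists_trigRule_head_mem_SofRR h'' hc hν
    refine ⟨L, mem_stabNegRule_head hL ?_, hLS⟩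
    rintro rfl
    exact coherent_SofRR _ ⟨hb (Or.inr rfl), hLS⟩

theorem exists_answerSet_ncard_weakViol_le [Finite Pred] [Finite D] (h'' : SatIC r'' IC) :
    ∃ S, AnswerSet S (changeProg r IC) ∧
      (weakViol ar S).ncard ≤ (symmDiff r.atoms r''.atoms).ncard := by
  obtain ⟨M, hM, hMans⟩ := exists_answerSet_subset coherent_SofRR finite_SofRR
    (satProg_SofRR h'') fun M hM hsat => reduct_changeProg_congr fun _ _ =>
      ⟨fun h => hM h, fun h => hsat.base_mem (base_mem_SofRR.mp h)⟩
  refine ⟨M, hMans, ?_⟩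
  rw [← (weakViol_injOn_snd M).ncard_image]
  exact Set.ncard_le_ncard
    (snd_image_weakViol_subset (fun _ _ => hMans.base_mem_iff)
      (fun _ _ h => primed_mem_SofRR.mp (hM h)) (fun _ _ h => (neg_primed_mem_SofRR.mp (hM h)).2))
    (r.finite.symmDiff r''.finite)

end CanonicalModel

/-- Theorem `td`, part 2. Let `r` be a database instance
over a finite domain `D` and `IC` a set of binary integrity constraints. For
every answer set `S` of the program `Π^D(r)`, the instance `I(S)` is a Dalal
repair of `r` wrt `IC`. -/
theorem statement10 {Pred D : Type} [Finite Pred] [Finite D] {ar : Pred → ℕ}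
    (r : Instance Pred D ar) (IC : Set (BIC Pred D ar))
    (S : Set (Lit (GAtom Pred D))) (hS : DalalAnswerSet r IC S) :
    ∃ r' : Instance Pred D ar, r'.atoms = IofS S ∧ IsDalalRepair r r' IC := by
  obtain ⟨hS, hmin⟩ := hS
  refine ⟨⟨IofS S, finite_setOf_length_eq_arity.subset hS.length_eq_of_mem_IofS,
    hS.length_eq_of_mem_IofS⟩, rfl, fun c hc ν => hS.holdsAt_IofS hc ν, fun r'' h'' => ?_⟩
  obtain ⟨S'', hS'', hle⟩ := exists_answerSet_ncard_weakViol_le (r := r) h''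
  calc (symmDiff r.atoms (IofS S)).ncard = (weakViol ar S).ncard := by
        rw [← hS.snd_image_weakViol, (weakViol_injOn_snd S).ncard_image]
    _ ≤ (weakViol ar S'').ncard := hmin S'' hS''
    _ ≤ (symmDiff r.atoms r''.atoms).ncard := hle

end CQA
end

section
/- Let r and r′ be database instances over the same schema and finite domain D, and IC a set of binary integrity constraints. If S is an answer set of the change program Π_Δ(r) with S ⊆ S(r,r′), then Δ(r, I(S)) ⊆ Δ(r, r′). -/
namespace CQA

variable {Pred D : Type} {ar : Pred → ℕ}

/-- first half of the proof of Lemma `l3`. Let `r`, `r'` be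
database instances over the same schema and finite domain `D`, and `IC` a set
of binary integrity constraints. If `S` is an answer set of the change program
`Π_Δ(r)` with `S ⊆ S(r,r')`, then `Δ(r, I(S)) ⊆ Δ(r, r')`. -/
theorem statement11 {Pred D : Type} [Finite Pred] [Finite D] {ar : Pred → ℕ}
    (r r' : Instance Pred D ar) (IC : Set (BIC Pred D ar))
    (S : Set (Lit (GAtom Pred D))) (hS : AnswerSet S (changeProg r IC))
    (hsub : S ⊆ SofRR r r') :
    symmDiff r.atoms (IofS S) ⊆ symmDiff r.atoms r'.atoms := by
  obtain ⟨hcoh, hsat, hmin⟩ := hS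
  intro a ha
  rw [Set.mem_symmDiff] at ha ⊢
  have hfact : ∀ b ∈ r.atoms, Lit.pos (GAtom.base b.1 b.2) ∈ S := by
    intro b hb
    have hR : fact (Lit.pos (GAtom.base b.1 b.2)) ∈ reduct (changeProg r IC) S := by
      refine ⟨fact (Lit.pos (GAtom.base b.1 b.2)), ?_, ?_, rfl⟩
      · exact Or.inl (Or.inl (Or.inl (Or.inl ⟨b, hb, rfl⟩)))
      · intro L hL; cases hL
    obtain ⟨L, hL, hLS⟩ := hsat _ hR (by intro x hx; cases hx) (by intro L hL; cases hL)
    cases hL; exact hLS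
  rcases ha with ⟨har, hnotI⟩ | ⟨hI, hnar⟩
  · -- a ∈ r, a ∉ IofS S
    have hbase := hfact a har
    have hnegp : Lit.neg (GAtom.primed a.1 a.2) ∈ S := by
      by_contra h
      exact hnotI (Or.inr ⟨hbase, h⟩)
    have hin := hsub hnegp
    left
    refine ⟨har, ?_⟩
    rcases hin with ((h | h) | h) | h
    · obtain ⟨b, _, heq⟩ := h; cases heq
    · obtain ⟨b, _, heq⟩ := h; cases heq
    · obtain ⟨b, _, hnb, heq⟩ := h
      have hab : a = b := by
        injection heq with h1; injection h1 with h1 h2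
        exact Prod.ext h1 h2
      rwa [hab]
    · obtain ⟨d, heq⟩ := h; cases heq
  · -- a ∈ IofS S, a ∉ r
    rcases hI with hprimed | ⟨hbase, _⟩
    · have hin := hsub hprimed
      right
      refine ⟨?_, hnar⟩
      rcases hin with ((h | h) | h) | h
      · obtain ⟨b, _, heq⟩ := h; cases heq
      · obtain ⟨b, hb, heq⟩ := h
        have hab : a = b := by
          injection heq with h1; injection h1 with h1 h2
          exact Prod.ext h1 h2
        rwa [hab]
      · obtain ⟨b, _, _, heq⟩ := h; cases heq
      · obtain ⟨d, heq⟩ := h; cases heq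
    · have hin := hsub hbase
      exfalso
      rcases hin with ((h | h) | h) | h
      · obtain ⟨b, hb, heq⟩ := h
        have hab : a = b := by
          injection heq with h1; injection h1 with h1 h2
          exact Prod.ext h1 h2
        exact hnar (hab ▸ hb)
      · obtain ⟨b, _, heq⟩ := h; cases heq
      · obtain ⟨b, _, _, heq⟩ := h; cases heq
      · obtain ⟨d, heq⟩ := h; cases heq

end CQA
end
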